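/- arXiv:1705.04268 — 7 statements merged into one kernel-verified Lean document; each statement's English description precedes it below -/
import Mathlib

section
/- (Differential equation (A1) for the coordinate functions x, y, z of the Ree curve.) For each p ∈ {p_x, p_y, p_z}, the identity ℓ^q0 * D^(q0+1) p + ℓ^(2q0) * D^(2q0+1) p + ℓ^(3q0) * D^(3q0+1) p = D^q p + ℓ * D^(q+1) p holds in F[X]. -/
noncomputable section

open Polynomial

abbrev F := ZMod 3

def q0 (s : ℕ) : ℕ := 3 ^ s
def q (s : ℕ) : ℕ := 3 ^ (2 * s + 1)

def pX : Polynomial F := X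
def pY (s : ℕ) : Polynomial F :=
  X ^ (q0 s + 1) - X ^ (q s + q0 s) + X ^ (q s * (q0 s + 1)) - X ^ (q s * (q s + q0 s))
def pZ (s : ℕ) : Polynomial F :=
  X ^ (2 * q0 s + 1) - X ^ (q s + 2 * q0 s) + X ^ (q s * (2 * q0 s + 1)) - X ^ (q s * (q s + 2 * q0 s))
def ell (s : ℕ) : Polynomial F := X ^ q s - X

/-- Block form of Lucas' theorem. -/
lemma blockC (p : ℕ) [Fact p.Prime] (k a b c d : ℕ) (ha : a < p ^ k) (hc : c < p ^ k) :
    (((a + p ^ k * b).choose (c + p ^ k * d) : ZMod p))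
      = (a.choose c : ZMod p) * (b.choose d : ZMod p) := by
  induction k generalizing a c with
  | zero =>
    simp only [pow_zero, Nat.lt_one_iff] at ha hc
    subst ha; subst hc; simp
  | succ k ih =>
    have hp : 0 < p := (Fact.out (p := p.Prime)).pos
    have step : ∀ n m : ℕ, ((n.choose m : ZMod p))
        = ((n % p).choose (m % p) : ZMod p) * ((n / p).choose (m / p) : ZMod p) := by
      intro n m
      have h := Choose.choose_modEq_choose_mod_mul_choose_div (p := p) (n := n) (k := m)
      have h2 := (ZMod.intCast_eq_intCast_iff _ _ _).mpr h
      push_cast at h2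
      exact_mod_cast h2
    have hmul : ∀ x : ℕ, p ^ (k + 1) * x = p * (p ^ k * x) := by
      intro x; ring
    rw [step (a + p ^ (k+1) * b) (c + p ^ (k+1) * d), step a c]
    rw [hmul b, hmul d, Nat.add_mul_mod_self_left, Nat.add_mul_mod_self_left,
      Nat.add_mul_div_left _ _ hp, Nat.add_mul_div_left _ _ hp]
    rw [ih (a / p) (c / p) (Nat.div_lt_of_lt_mul (by rwa [← pow_succ']))
      (Nat.div_lt_of_lt_mul (by rwa [← pow_succ']))]
    ring

lemma chooseF' (K a b c d n k : ℕ) (hn : n = a + 3 ^ K * b) (hk : k = c + 3 ^ K * d)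
    (ha : a < 3 ^ K) (hc : c < 3 ^ K) :
    ((n.choose k : F)) = (a.choose c : F) * (b.choose d : F) := by
  subst hn hk; exact blockC 3 K a b c d ha hc

lemma chooseF0' (K b c d n k : ℕ) (hn : n = 3 ^ K * b) (hk : k = c + 3 ^ K * d)
    (hc : c < 3 ^ K) (hc0 : 0 < c) : ((n.choose k : F)) = 0 := by
  rw [chooseF' K 0 b c d n k (by omega) hk (by positivity) hc,
    Nat.choose_eq_zero_of_lt hc0]
  simp

lemma hDF (k n : ℕ) :
    hasseDeriv k (X ^ n : Polynomial F) = C (n.choose k : F) * X ^ (n - k) := by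
  rw [X_pow_eq_monomial, hasseDeriv_monomial, mul_one, C_mul_X_pow_eq_monomial]

lemma castpow3 (m : ℕ) (hm : m ≠ 0) : ((3 ^ m : ℕ) : F) = 0 := by
  push_cast
  rw [show (3 : F) = 0 from rfl]
  exact zero_pow hm

lemma big (s : ℕ) (hs : 1 ≤ s) : 3 * 3 ^ s + 1 < 3 ^ (2 * s + 1) := by
  have e2 : (3:ℕ) ^ (2*s+1) = 3 * 3 ^ (2*s) := by ring
  have le : 3 * (3:ℕ) ^ s ≤ 3 ^ (2*s) := by
    calc 3 * 3 ^ s = 3 ^ (s+1) := by ring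
    _ ≤ 3 ^ (2*s) := Nat.pow_le_pow_right (by norm_num) (by omega)
  have p0 : (0:ℕ) < 3 ^ (2*s) := by positivity
  omega

section

variable (s : ℕ) (hs : 1 ≤ s)
include hs

lemma h1pow : (1:ℕ) < 3 ^ s := Nat.one_lt_pow (by omega) (by norm_num)

-- inequality bundle in terms of q0, q
lemma hqq : 3 * q0 s + 1 < q s ∧ 1 < q0 s := by
  have := big s hs
  have := h1pow s hs
  simp only [q0, q]
  omega

/- ### derivatives of pY -/

lemma dY1 : hasseDeriv (q0 s + 1) (pY s) = 1 := by
  obtain ⟨hb, h1⟩ := hqq s hs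
  have h0 : (0:ℕ) < 3 ^ s := by positivity
  have hq2 : q0 s + 1 < 3 ^ (2*s+1) := by simp only [q0, q] at hb ⊢; omega
  have z2 : ((q s + q0 s).choose (q0 s + 1) : F) = 0 :=
    chooseF0' s (3^(s+1)+1) 1 1 _ _ (by simp only [q, q0]; ring)
      (by simp only [q0]; ring) (by simpa [q0] using h1) one_pos
  have z3 : ((q s * (q0 s + 1)).choose (q0 s + 1) : F) = 0 :=
    chooseF0' (2*s+1) (q0 s + 1) (q0 s + 1) 0 _ _ (by simp only [q]) (by ring)
      hq2 (by omega)
  have z4 : ((q s * (q s + q0 s)).choose (q0 s + 1) : F) = 0 :=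
    chooseF0' (2*s+1) (q s + q0 s) (q0 s + 1) 0 _ _ (by simp only [q]) (by ring)
      hq2 (by omega)
  rw [pY, map_sub, map_add, map_sub, hDF, hDF, hDF, hDF, z2, z3, z4,
    Nat.choose_self, Nat.sub_self]
  simp

lemma dY2 : hasseDeriv (2 * q0 s + 1) (pY s) = 0 := by
  obtain ⟨hb, h1⟩ := hqq s hs
  have hq2 : 2 * q0 s + 1 < 3 ^ (2*s+1) := by simp only [q0, q] at hb ⊢; omega
  have z1 : ((q0 s + 1).choose (2 * q0 s + 1) : F) = 0 := by
    rw [Nat.choose_eq_zero_of_lt (by omega)]; simp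
  have z2 : ((q s + q0 s).choose (2 * q0 s + 1) : F) = 0 :=
    chooseF0' s (3^(s+1)+1) 1 2 _ _ (by simp only [q, q0]; ring)
      (by simp only [q0]; ring) (by simpa [q0] using h1) one_pos
  have z3 : ((q s * (q0 s + 1)).choose (2 * q0 s + 1) : F) = 0 :=
    chooseF0' (2*s+1) (q0 s + 1) (2 * q0 s + 1) 0 _ _ (by simp only [q]) (by ring)
      hq2 (by omega)
  have z4 : ((q s * (q s + q0 s)).choose (2 * q0 s + 1) : F) = 0 :=
    chooseF0' (2*s+1) (q s + q0 s) (2 * q0 s + 1) 0 _ _ (by simp only [q]) (by ring)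
      hq2 (by omega)
  rw [pY, map_sub, map_add, map_sub, hDF, hDF, hDF, hDF, z1, z2, z3, z4]
  simp

lemma dY3 : hasseDeriv (3 * q0 s + 1) (pY s) = 0 := by
  obtain ⟨hb, h1⟩ := hqq s hs
  have hq2 : 3 * q0 s + 1 < 3 ^ (2*s+1) := by simp only [q0, q] at hb ⊢; omega
  have z1 : ((q0 s + 1).choose (3 * q0 s + 1) : F) = 0 := by
    rw [Nat.choose_eq_zero_of_lt (by omega)]; simp
  have z2 : ((q s + q0 s).choose (3 * q0 s + 1) : F) = 0 :=
    chooseF0' s (3^(s+1)+1) 1 3 _ _ (by simp only [q, q0]; ring)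
      (by simp only [q0]; ring) (by simpa [q0] using h1) one_pos
  have z3 : ((q s * (q0 s + 1)).choose (3 * q0 s + 1) : F) = 0 :=
    chooseF0' (2*s+1) (q0 s + 1) (3 * q0 s + 1) 0 _ _ (by simp only [q]) (by ring)
      hq2 (by omega)
  have z4 : ((q s * (q s + q0 s)).choose (3 * q0 s + 1) : F) = 0 :=
    chooseF0' (2*s+1) (q s + q0 s) (3 * q0 s + 1) 0 _ _ (by simp only [q]) (by ring)
      hq2 (by omega)
  rw [pY, map_sub, map_add, map_sub, hDF, hDF, hDF, hDF, z1, z2, z3, z4]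
  simp

lemma dYq : hasseDeriv (q s) (pY s) = X ^ (q s * q0 s) - X ^ (q0 s) := by
  obtain ⟨hb, h1⟩ := hqq s hs
  have h0 : (0:ℕ) < 3 ^ s := by positivity
  have h0' : (0:ℕ) < 3 ^ (2*s+1) := by positivity
  have z1 : ((q0 s + 1).choose (q s) : F) = 0 := by
    rw [Nat.choose_eq_zero_of_lt (by omega)]; simp
  have c2 : ((q s + q0 s).choose (q s) : F) = 1 := by
    rw [chooseF' s 0 (3^(s+1)+1) 0 (3^(s+1)) _ _ (by simp only [q, q0]; ring)
      (by simp only [q]; ring) h0 h0, Nat.choose_succ_self_right]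
    simp [castpow3 (s+1) (by omega)]
  have c3 : ((q s * (q0 s + 1)).choose (q s) : F) = 1 := by
    rw [chooseF' (2*s+1) 0 (q0 s + 1) 0 1 _ _ (by simp only [q]; ring)
      (by simp only [q]; ring) h0' h0', Nat.choose_one_right]
    simp [q0, castpow3 s (by omega)]
  have z4 : ((q s * (q s + q0 s)).choose (q s) : F) = 0 := by
    rw [chooseF' (2*s+1) 0 (q s + q0 s) 0 1 _ _ (by simp only [q]; ring)
      (by simp only [q]; ring) h0' h0', Nat.choose_one_right]
    simp [q, q0, castpow3 s (by omega), castpow3 (2*s+1) (by omega)]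
  have e2 : q s + q0 s - q s = q0 s := by omega
  have e3 : q s * (q0 s + 1) - q s = q s * q0 s := by
    have : q s * (q0 s + 1) = q s * q0 s + q s := by ring
    omega
  rw [pY, map_sub, map_add, map_sub, hDF, hDF, hDF, hDF, z1, c2, c3, z4, e2, e3]
  simp
  ring

lemma dYq1 : hasseDeriv (q s + 1) (pY s) = 0 := by
  obtain ⟨hb, h1⟩ := hqq s hs
  have h0' : (0:ℕ) < 3 ^ (2*s+1) := by positivity
  have z1 : ((q0 s + 1).choose (q s + 1) : F) = 0 := by
    rw [Nat.choose_eq_zero_of_lt (by omega)]; simp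
  have z2 : ((q s + q0 s).choose (q s + 1) : F) = 0 :=
    chooseF0' s (3^(s+1)+1) 1 (3^(s+1)) _ _ (by simp only [q, q0]; ring)
      (by simp only [q]; ring) (by simpa [q0] using h1) one_pos
  have z3 : ((q s * (q0 s + 1)).choose (q s + 1) : F) = 0 :=
    chooseF0' (2*s+1) (q0 s + 1) 1 1 _ _ (by simp only [q]) (by simp only [q]; ring)
      (Nat.one_lt_pow (by omega) (by norm_num)) one_pos
  have z4 : ((q s * (q s + q0 s)).choose (q s + 1) : F) = 0 :=
    chooseF0' (2*s+1) (q s + q0 s) 1 1 _ _ (by simp only [q]) (by simp only [q]; ring)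
      (Nat.one_lt_pow (by omega) (by norm_num)) one_pos
  rw [pY, map_sub, map_add, map_sub, hDF, hDF, hDF, hDF, z1, z2, z3, z4]
  simp

/- ### derivatives of pZ -/

lemma dZ1 : hasseDeriv (q0 s + 1) (pZ s) = C 2 * X ^ (q0 s) := by
  obtain ⟨hb, h1⟩ := hqq s hs
  have h1' : (1:ℕ) < 3 ^ s := by simpa [q0] using h1
  have hq2 : q0 s + 1 < 3 ^ (2*s+1) := by simp only [q0, q] at hb ⊢; omega
  have c1 : ((2 * q0 s + 1).choose (q0 s + 1) : F) = 2 := by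
    rw [chooseF' s 1 2 1 1 _ _ (by simp only [q0]; ring) (by simp only [q0]; ring) h1' h1']
    norm_num [Nat.choose]
  have z2 : ((q s + 2 * q0 s).choose (q0 s + 1) : F) = 0 :=
    chooseF0' s (3^(s+1)+2) 1 1 _ _ (by simp only [q, q0]; ring)
      (by simp only [q0]; ring) h1' one_pos
  have z3 : ((q s * (2 * q0 s + 1)).choose (q0 s + 1) : F) = 0 :=
    chooseF0' (2*s+1) (2 * q0 s + 1) (q0 s + 1) 0 _ _ (by simp only [q]) (by ring)
      hq2 (by omega)
  have z4 : ((q s * (q s + 2 * q0 s)).choose (q0 s + 1) : F) = 0 :=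
    chooseF0' (2*s+1) (q s + 2 * q0 s) (q0 s + 1) 0 _ _ (by simp only [q]) (by ring)
      hq2 (by omega)
  have e1 : 2 * q0 s + 1 - (q0 s + 1) = q0 s := by omega
  rw [pZ, map_sub, map_add, map_sub, hDF, hDF, hDF, hDF, c1, z2, z3, z4, e1]
  simp

lemma dZ2 : hasseDeriv (2 * q0 s + 1) (pZ s) = 1 := by
  obtain ⟨hb, h1⟩ := hqq s hs
  have h1' : (1:ℕ) < 3 ^ s := by simpa [q0] using h1
  have hq2 : 2 * q0 s + 1 < 3 ^ (2*s+1) := by simp only [q0, q] at hb ⊢; omega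
  have z2 : ((q s + 2 * q0 s).choose (2 * q0 s + 1) : F) = 0 :=
    chooseF0' s (3^(s+1)+2) 1 2 _ _ (by simp only [q, q0]; ring)
      (by simp only [q0]; ring) h1' one_pos
  have z3 : ((q s * (2 * q0 s + 1)).choose (2 * q0 s + 1) : F) = 0 :=
    chooseF0' (2*s+1) (2 * q0 s + 1) (2 * q0 s + 1) 0 _ _ (by simp only [q]) (by ring)
      hq2 (by omega)
  have z4 : ((q s * (q s + 2 * q0 s)).choose (2 * q0 s + 1) : F) = 0 :=
    chooseF0' (2*s+1) (q s + 2 * q0 s) (2 * q0 s + 1) 0 _ _ (by simp only [q]) (by ring)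
      hq2 (by omega)
  rw [pZ, map_sub, map_add, map_sub, hDF, hDF, hDF, hDF, z2, z3, z4,
    Nat.choose_self, Nat.sub_self]
  simp

lemma dZ3 : hasseDeriv (3 * q0 s + 1) (pZ s) = 0 := by
  obtain ⟨hb, h1⟩ := hqq s hs
  have h1' : (1:ℕ) < 3 ^ s := by simpa [q0] using h1
  have hq2 : 3 * q0 s + 1 < 3 ^ (2*s+1) := by simp only [q0, q] at hb ⊢; omega
  have z1 : ((2 * q0 s + 1).choose (3 * q0 s + 1) : F) = 0 := by
    rw [Nat.choose_eq_zero_of_lt (by omega)]; simp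
  have z2 : ((q s + 2 * q0 s).choose (3 * q0 s + 1) : F) = 0 :=
    chooseF0' s (3^(s+1)+2) 1 3 _ _ (by simp only [q, q0]; ring)
      (by simp only [q0]; ring) h1' one_pos
  have z3 : ((q s * (2 * q0 s + 1)).choose (3 * q0 s + 1) : F) = 0 :=
    chooseF0' (2*s+1) (2 * q0 s + 1) (3 * q0 s + 1) 0 _ _ (by simp only [q]) (by ring)
      hq2 (by omega)
  have z4 : ((q s * (q s + 2 * q0 s)).choose (3 * q0 s + 1) : F) = 0 :=
    chooseF0' (2*s+1) (q s + 2 * q0 s) (3 * q0 s + 1) 0 _ _ (by simp only [q]) (by ring)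
      hq2 (by omega)
  rw [pZ, map_sub, map_add, map_sub, hDF, hDF, hDF, hDF, z1, z2, z3, z4]
  simp

lemma dZq : hasseDeriv (q s) (pZ s) = X ^ (q s * (2 * q0 s)) - X ^ (2 * q0 s) := by
  obtain ⟨hb, h1⟩ := hqq s hs
  have h0 : (0:ℕ) < 3 ^ s := by positivity
  have h0' : (0:ℕ) < 3 ^ (2*s+1) := by positivity
  have z1 : ((2 * q0 s + 1).choose (q s) : F) = 0 := by
    rw [Nat.choose_eq_zero_of_lt (by omega)]; simp
  have c2 : ((q s + 2 * q0 s).choose (q s) : F) = 1 := by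
    rw [chooseF' s 0 (3^(s+1)+2) 0 (3^(s+1)) _ _ (by simp only [q, q0]; ring)
      (by simp only [q]; ring) h0 h0, Nat.choose_self,
      chooseF' 1 2 (3^s) 0 (3^s) (3^(s+1)+2) (3^(s+1)) (by ring) (by ring)
        (by norm_num) (by norm_num)]
    simp [Nat.choose]
  have c3 : ((q s * (2 * q0 s + 1)).choose (q s) : F) = 1 := by
    rw [chooseF' (2*s+1) 0 (2 * q0 s + 1) 0 1 _ _ (by simp only [q]; ring)
      (by simp only [q]; ring) h0' h0', Nat.choose_one_right]
    simp [q0, castpow3 s (by omega)]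
  have z4 : ((q s * (q s + 2 * q0 s)).choose (q s) : F) = 0 := by
    rw [chooseF' (2*s+1) 0 (q s + 2 * q0 s) 0 1 _ _ (by simp only [q]; ring)
      (by simp only [q]; ring) h0' h0', Nat.choose_one_right]
    simp [q, q0, castpow3 s (by omega), castpow3 (2*s+1) (by omega)]
  have e2 : q s + 2 * q0 s - q s = 2 * q0 s := by omega
  have e3 : q s * (2 * q0 s + 1) - q s = q s * (2 * q0 s) := by
    have : q s * (2 * q0 s + 1) = q s * (2 * q0 s) + q s := by ring
    omega
  rw [pZ, map_sub, map_add, map_sub, hDF, hDF, hDF, hDF, z1, c2, c3, z4, e2, e3]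
  simp
  ring

lemma dZq1 : hasseDeriv (q s + 1) (pZ s) = 0 := by
  obtain ⟨hb, h1⟩ := hqq s hs
  have h1' : (1:ℕ) < 3 ^ s := by simpa [q0] using h1
  have z1 : ((2 * q0 s + 1).choose (q s + 1) : F) = 0 := by
    rw [Nat.choose_eq_zero_of_lt (by omega)]; simp
  have z2 : ((q s + 2 * q0 s).choose (q s + 1) : F) = 0 :=
    chooseF0' s (3^(s+1)+2) 1 (3^(s+1)) _ _ (by simp only [q, q0]; ring)
      (by simp only [q]; ring) h1' one_pos
  have z3 : ((q s * (2 * q0 s + 1)).choose (q s + 1) : F) = 0 :=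
    chooseF0' (2*s+1) (2 * q0 s + 1) 1 1 _ _ (by simp only [q]) (by simp only [q]; ring)
      (Nat.one_lt_pow (by omega) (by norm_num)) one_pos
  have z4 : ((q s * (q s + 2 * q0 s)).choose (q s + 1) : F) = 0 :=
    chooseF0' (2*s+1) (q s + 2 * q0 s) 1 1 _ _ (by simp only [q]) (by simp only [q]; ring)
      (Nat.one_lt_pow (by omega) (by norm_num)) one_pos
  rw [pZ, map_sub, map_add, map_sub, hDF, hDF, hDF, hDF, z1, z2, z3, z4]
  simp

end

lemma hell (s : ℕ) : ell s ^ q0 s = X ^ (q s * q0 s) - X ^ (q0 s) := by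
  simp only [ell, q0]
  rw [sub_pow_char_pow, ← pow_mul]

theorem stmt7 (s : ℕ) (hs : 1 ≤ s) (p : Polynomial F)
    (hp : p = pX ∨ p = pY s ∨ p = pZ s) :
    ell s ^ q0 s * hasseDeriv (q0 s + 1) p
      + ell s ^ (2 * q0 s) * hasseDeriv (2 * q0 s + 1) p
      + ell s ^ (3 * q0 s) * hasseDeriv (3 * q0 s + 1) p
    = hasseDeriv (q s) p + ell s * hasseDeriv (q s + 1) p := by
  obtain rfl | rfl | rfl := hp
  · have h0 : 0 < q0 s := by simp only [q0]; positivity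
    have h1 : 1 < q s := by
      simp only [q]; exact Nat.one_lt_pow (by omega) (by norm_num)
    rw [pX, hasseDeriv_X (k := q0 s + 1) (by omega), hasseDeriv_X (k := 2 * q0 s + 1) (by omega),
      hasseDeriv_X (k := 3 * q0 s + 1) (by omega), hasseDeriv_X (k := q s) (by omega),
      hasseDeriv_X (k := q s + 1) (by omega)]
    simp
  · rw [dY1 s hs, dY2 s hs, dY3 s hs, dYq s hs, dYq1 s hs, hell s]
    ring
  · rw [dZ1 s hs, dZ2 s hs, dZ3 s hs, dZq s hs, dZq1 s hs,
      show ell s ^ (2 * q0 s) = (ell s ^ q0 s) ^ 2 from by rw [mul_comm, pow_mul],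
      show q s * (2 * q0 s) = q s * q0 s * 2 from by ring, pow_mul,
      show 2 * q0 s = q0 s * 2 from by ring, pow_mul, hell s,
      map_ofNat (C : F →+* Polynomial F) 2]
    ring
end
end

section
/- (Differential equation (A2) for the coordinate functions x, y, z of the Ree curve.) For each p ∈ {p_x, p_y, p_z}, the identity ℓ^q0 * (D^(q+2q0) p + D^(2q0+1) p) = D^(q+q0) p + D^(q0+1) p holds in F[X]. -/
noncomputable section

open Polynomial

/-- One step of Lucas's theorem in `ZMod 3`. -/
lemma lucas_step (n k : ℕ) :
    ((n.choose k : ℕ) : ZMod 3) = ((n % 3).choose (k % 3) : ℕ) * ((n / 3).choose (k / 3) : ℕ) := by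
  haveI : Fact (Nat.Prime 3) := ⟨by norm_num⟩
  have h := (ZMod.natCast_eq_natCast_iff _ _ _).mpr
    (@Choose.choose_modEq_choose_mod_mul_choose_div_nat n k 3 _)
  push_cast at h ⊢
  exact h

/-- Block version of Lucas's theorem. -/
lemma lucas_block (r : ℕ) (n0 n1 k0 k1 : ℕ) (hn : n0 < 3 ^ r) (hk : k0 < 3 ^ r) :
    (((n0 + 3 ^ r * n1).choose (k0 + 3 ^ r * k1) : ℕ) : ZMod 3)
      = ((n0.choose k0 : ℕ) : ZMod 3) * ((n1.choose k1 : ℕ) : ZMod 3) := by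
  induction r generalizing n0 k0 with
  | zero =>
    simp only [pow_zero] at hn hk
    interval_cases n0
    interval_cases k0
    simp
  | succ r ih =>
    have h3 : (3:ℕ) ^ (r+1) = 3 ^ r * 3 := pow_succ 3 r
    have e : ∀ m : ℕ, m + 3 ^ (r+1) * n1 = m + 3 * (3 ^ r * n1) := by
      intro m; rw [h3]; ring
    have ek : ∀ m : ℕ, m + 3 ^ (r+1) * k1 = m + 3 * (3 ^ r * k1) := by
      intro m; rw [h3]; ring
    have hmod : (n0 + 3 ^ (r+1) * n1) % 3 = n0 % 3 := by
      rw [e, Nat.add_mul_mod_self_left]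
    have hdiv : (n0 + 3 ^ (r+1) * n1) / 3 = n0 / 3 + 3 ^ r * n1 := by
      rw [e, Nat.add_mul_div_left _ _ (by norm_num : (0:ℕ) < 3)]
    have hmodk : (k0 + 3 ^ (r+1) * k1) % 3 = k0 % 3 := by
      rw [ek, Nat.add_mul_mod_self_left]
    have hdivk : (k0 + 3 ^ (r+1) * k1) / 3 = k0 / 3 + 3 ^ r * k1 := by
      rw [ek, Nat.add_mul_div_left _ _ (by norm_num : (0:ℕ) < 3)]
    have hn' : n0 / 3 < 3 ^ r := by rw [h3] at hn; omega
    have hk' : k0 / 3 < 3 ^ r := by rw [h3] at hk; omega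
    rw [lucas_step, hmod, hdiv, hmodk, hdivk, ih _ _ hn' hk', lucas_step n0 k0]
    ring

/-- Digit-0 mismatch gives a vanishing binomial coefficient mod 3. -/
lemma digit0_zero (n k : ℕ) (hn : n % 3 = 0) (hk : k % 3 = 1) :
    ((n.choose k : ℕ) : ZMod 3) = 0 := by
  rw [lucas_step, hn, hk]
  simp

/-- Digit mismatch inside the first `r` digits when `3^r ∣ n`. -/
lemma block_zero (r n k k0 k1 : ℕ) (hn : 3 ^ r ∣ n) (h0 : 0 < k0) (hk0 : k0 < 3 ^ r)
    (hk : k = k0 + 3 ^ r * k1) : ((n.choose k : ℕ) : ZMod 3) = 0 := by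
  obtain ⟨n1, rfl⟩ := hn
  subst hk
  have := lucas_block r 0 n1 k0 k1 (by positivity) hk0
  simpa [Nat.choose_eq_zero_of_lt h0] using this

theorem stmt8 (s : ℕ) (hs : 1 ≤ s) (p : Polynomial F)
    (hp : p = pX ∨ p = pY s ∨ p = pZ s) :
    ell s ^ q0 s * (hasseDeriv (q s + 2 * q0 s) p + hasseDeriv (2 * q0 s + 1) p)
    = hasseDeriv (q s + q0 s) p + hasseDeriv (q0 s + 1) p := by
  have hD : ∀ n k : ℕ, hasseDeriv k (X ^ n : Polynomial F)
      = monomial (n - k) ((n.choose k : ℕ) : F) := by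
    intro n k
    rw [X_pow_eq_monomial, hasseDeriv_monomial, mul_one]
  have hQ3 : 3 ≤ q0 s := by
    rw [q0]
    calc 3 = 3 ^ 1 := (pow_one 3).symm
    _ ≤ 3 ^ s := Nat.pow_le_pow_right (by norm_num) hs
  have hq : q s = 3 * q0 s * q0 s := by
    rw [q, q0, two_mul, pow_succ, pow_add]; ring
  have hq27 : 27 ≤ q s := by rw [hq]; nlinarith
  have hQdvd : (3:ℕ) ∣ q0 s := by
    rw [q0]; exact dvd_pow_self 3 (by omega)
  have hQmod : q0 s % 3 = 0 := by obtain ⟨c, hc⟩ := hQdvd; omega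
  have hqmod : q s % 3 = 0 := by rw [hq, mul_assoc, Nat.mul_mod_right]
  -- divisibility of q by 3^(s+1)
  have hqd : (3:ℕ) ^ (s+1) ∣ q s := by
    rw [q]; exact pow_dvd_pow 3 (by omega)
  have hqeq : q s = 3 ^ (s+1) * 3 ^ s := by rw [q, ← pow_add]; congr 1; omega
  -- block zeros: n divisible by 3^(s+1), k = q s + c * q0 s with c = 1 or 2
  have zb : ∀ n c : ℕ, (3:ℕ)^(s+1) ∣ n → 0 < c → c < 3 →
      ((n.choose (q s + c * q0 s) : ℕ) : F) = 0 := by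
    intro n c hn hc0 hc3
    apply block_zero (s+1) n _ (c * 3^s) (3^s) hn (by positivity)
      (by rw [pow_succ, Nat.mul_comm (3^s) 3]
          exact Nat.mul_lt_mul_of_pos_right hc3 (by positivity))
    rw [hqeq, q0]; ring
  -- the two nontrivial Lucas values
  have cA : (((2 * q0 s + 1).choose (q0 s + 1) : ℕ) : F) = 2 := by
    have e1 : 2 * q0 s + 1 = 1 + 3 ^ s * 2 := by rw [q0]; ring
    have e2 : q0 s + 1 = 1 + 3 ^ s * 1 := by rw [q0]; ring
    rw [e1, e2, lucas_block s 1 2 1 1 (by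
      calc 1 < 3 ^ 1 := by norm_num
      _ ≤ 3 ^ s := Nat.pow_le_pow_right (by norm_num) hs) (by
      calc 1 < 3 ^ 1 := by norm_num
      _ ≤ 3 ^ s := Nat.pow_le_pow_right (by norm_num) hs)]
    norm_num [Nat.choose]
  have cB : (((q s + 2 * q0 s).choose (q s + q0 s) : ℕ) : F) = 2 := by
    have hlt : (0:ℕ) < 3 ^ s := by positivity
    have e1 : q s + 2 * q0 s = 0 + 3 ^ s * (3 ^ (s+1) + 2) := by
      rw [hqeq, q0]; ring
    have e2 : q s + q0 s = 0 + 3 ^ s * (3 ^ (s+1) + 1) := by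
      rw [hqeq, q0]; ring
    rw [e1, e2, lucas_block s 0 (3^(s+1)+2) 0 (3^(s+1)+1) hlt hlt]
    have e3 : 3 ^ (s+1) + 2 = 2 + 3 ^ (s+1) * 1 := by ring
    have e4 : 3 ^ (s+1) + 1 = 1 + 3 ^ (s+1) * 1 := by ring
    have hlt' : (2:ℕ) < 3 ^ (s+1) := by
      calc 2 < 3 ^ 1 := by norm_num
      _ ≤ 3 ^ (s+1) := Nat.pow_le_pow_right (by norm_num) (by omega)
    rw [e3, e4, lucas_block (s+1) 2 1 1 1 hlt' (by omega)]
    norm_num [Nat.choose]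
  have hqQ : q0 s * 9 ≤ q s := by rw [hq]; nlinarith
  have zb1 : ∀ n : ℕ, 3 ^ (s+1) ∣ n → ((n.choose (q s + q0 s) : ℕ) : F) = 0 := by
    intro n hn
    have := zb n 1 hn one_pos (by norm_num)
    rwa [one_mul] at this
  have zb2 : ∀ n : ℕ, 3 ^ (s+1) ∣ n → ((n.choose (q s + 2 * q0 s) : ℕ) : F) = 0 :=
    fun n hn => zb n 2 hn (by norm_num) (by norm_num)
  have hmul : ∀ x : ℕ, q s * x % 3 = 0 := fun x => by
    rw [Nat.mul_mod, hqmod]; simp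
  obtain rfl | rfl | rfl := hp
  · -- p = X
    have hx : (X : Polynomial F) = X ^ 1 := (pow_one X).symm
    rw [pX, hx, hD, hD, hD, hD,
      Nat.choose_eq_zero_of_lt (show 1 < q s + 2 * q0 s by omega),
      Nat.choose_eq_zero_of_lt (show 1 < 2 * q0 s + 1 by omega),
      Nat.choose_eq_zero_of_lt (show 1 < q s + q0 s by omega),
      Nat.choose_eq_zero_of_lt (show 1 < q0 s + 1 by omega)]
    simp
  · -- p = pY
    simp only [pY, map_sub, map_add, hD]
    rw [Nat.choose_self, Nat.choose_self,
      -- derivative at q s + 2 q0 s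
      Nat.choose_eq_zero_of_lt (show q0 s + 1 < q s + 2 * q0 s by omega),
      Nat.choose_eq_zero_of_lt (show q s + q0 s < q s + 2 * q0 s by omega),
      zb2 (q s * (q0 s + 1)) (Dvd.dvd.mul_right hqd _),
      zb2 (q s * (q s + q0 s)) (Dvd.dvd.mul_right hqd _),
      -- derivative at 2 q0 s + 1
      Nat.choose_eq_zero_of_lt (show q0 s + 1 < 2 * q0 s + 1 by omega),
      digit0_zero (q s + q0 s) (2 * q0 s + 1) (by omega) (by omega),
      digit0_zero (q s * (q0 s + 1)) (2 * q0 s + 1) (hmul _) (by omega),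
      digit0_zero (q s * (q s + q0 s)) (2 * q0 s + 1) (hmul _) (by omega),
      -- derivative at q s + q0 s
      Nat.choose_eq_zero_of_lt (show q0 s + 1 < q s + q0 s by omega),
      zb1 (q s * (q0 s + 1)) (Dvd.dvd.mul_right hqd _),
      zb1 (q s * (q s + q0 s)) (Dvd.dvd.mul_right hqd _),
      -- derivative at q0 s + 1
      digit0_zero (q s + q0 s) (q0 s + 1) (by omega) (by omega),
      digit0_zero (q s * (q0 s + 1)) (q0 s + 1) (hmul _) (by omega),
      digit0_zero (q s * (q s + q0 s)) (q0 s + 1) (hmul _) (by omega)]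
    simp only [Nat.cast_zero, Nat.cast_one, Nat.sub_self, monomial_zero_right]
    ring
  · -- p = pZ
    simp only [pZ, map_sub, map_add, hD]
    rw [Nat.choose_self, Nat.choose_self, cA, cB,
      -- derivative at q s + 2 q0 s
      Nat.choose_eq_zero_of_lt (show 2 * q0 s + 1 < q s + 2 * q0 s by omega),
      zb2 (q s * (2 * q0 s + 1)) (Dvd.dvd.mul_right hqd _),
      zb2 (q s * (q s + 2 * q0 s)) (Dvd.dvd.mul_right hqd _),
      -- derivative at 2 q0 s + 1
      digit0_zero (q s + 2 * q0 s) (2 * q0 s + 1) (by omega) (by omega),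
      digit0_zero (q s * (2 * q0 s + 1)) (2 * q0 s + 1) (hmul _) (by omega),
      digit0_zero (q s * (q s + 2 * q0 s)) (2 * q0 s + 1) (hmul _) (by omega),
      -- derivative at q s + q0 s
      Nat.choose_eq_zero_of_lt (show 2 * q0 s + 1 < q s + q0 s by omega),
      zb1 (q s * (2 * q0 s + 1)) (Dvd.dvd.mul_right hqd _),
      zb1 (q s * (q s + 2 * q0 s)) (Dvd.dvd.mul_right hqd _),
      -- derivative at q0 s + 1
      digit0_zero (q s + 2 * q0 s) (q0 s + 1) (by omega) (by omega),
      digit0_zero (q s * (2 * q0 s + 1)) (q0 s + 1) (hmul _) (by omega),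
      digit0_zero (q s * (q s + 2 * q0 s)) (q0 s + 1) (hmul _) (by omega)]
    have h1 : 2 * q0 s + 1 - (q0 s + 1) = q0 s := by omega
    have h2 : q s + 2 * q0 s - (q s + q0 s) = q0 s := by omega
    rw [h1, h2]
    simp only [Nat.cast_zero, Nat.cast_one, Nat.sub_self, monomial_zero_right]
    ring
end
end

section
/- (Differential equation (A4) for the coordinate functions x, y, z of the Ree curve.) For each p ∈ {p_x, p_y, p_z}, the identity ℓ * D^(2q+q0) p = D^(q0+1) p + D^(q+q0) p holds in F[X]. -/
noncomputable section

open Polynomial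

private lemma expandAB (u v : ℕ) :
    (((X : F[X]) + 1) ^ (3 ^ u + 3 ^ v)) =
      X ^ (3 ^ u + 3 ^ v) + X ^ (3 ^ u) + X ^ (3 ^ v) + 1 := by
  rw [pow_add, add_pow_char_pow, add_pow_char_pow, one_pow]
  ring

private lemma expandA2B (u v : ℕ) :
    (((X : F[X]) + 1) ^ (3 ^ u + 2 * 3 ^ v)) =
      X ^ (3 ^ u + 2 * 3 ^ v) + 2 * X ^ (3 ^ u + 3 ^ v) + X ^ (3 ^ u)
        + X ^ (2 * 3 ^ v) + 2 * X ^ (3 ^ v) + 1 := by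
  have h2 : ((X : F[X]) + 1) ^ (2 * 3 ^ v) = (X ^ (3 ^ v) + 1) ^ 2 := by
    rw [mul_comm, pow_mul, add_pow_char_pow, one_pow]
  rw [pow_add, add_pow_char_pow, one_pow, h2]
  ring

private lemma chooseAB_zero {u v k : ℕ} (h0 : k ≠ 0) (h1 : k ≠ 3 ^ u)
    (h2 : k ≠ 3 ^ v) (h3 : k ≠ 3 ^ u + 3 ^ v) :
    (((3 ^ u + 3 ^ v).choose k : ℕ) : F) = 0 := by
  rw [← coeff_X_add_one_pow F, expandAB]
  simp [coeff_X_pow, coeff_one, h0, h1, h2, h3]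

private lemma chooseA2B_zero {u v k : ℕ} (h0 : k ≠ 0) (h1 : k ≠ 3 ^ u)
    (h2 : k ≠ 3 ^ v) (h3 : k ≠ 2 * 3 ^ v) (h4 : k ≠ 3 ^ u + 3 ^ v)
    (h5 : k ≠ 3 ^ u + 2 * 3 ^ v) :
    (((3 ^ u + 2 * 3 ^ v).choose k : ℕ) : F) = 0 := by
  rw [← coeff_X_add_one_pow F, expandA2B]
  simp [coeff_X_pow, coeff_one, h0, h1, h2, h3, h4, h5]

private lemma chooseA2B_two {u v : ℕ} (huv : u ≠ v) :
    (((3 ^ u + 2 * 3 ^ v).choose (3 ^ u + 3 ^ v) : ℕ) : F) = 2 := by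
  have hne : (3:ℕ) ^ u ≠ 3 ^ v := fun h => huv (Nat.pow_right_injective (by norm_num) h)
  have hv : 0 < (3:ℕ) ^ v := pow_pos (by norm_num) _
  have hu : 0 < (3:ℕ) ^ u := pow_pos (by norm_num) _
  rw [← coeff_X_add_one_pow F, expandA2B]
  have n1 : 3 ^ u + 3 ^ v ≠ 3 ^ u + 2 * 3 ^ v := by omega
  have n2 : 3 ^ u + 3 ^ v ≠ 3 ^ u := by omega
  have n3 : 3 ^ u + 3 ^ v ≠ 2 * 3 ^ v := by omega
  have n4 : 3 ^ u + 3 ^ v ≠ 3 ^ v := by omega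
  have n5 : 3 ^ u + 3 ^ v ≠ 0 := by omega
  simp [coeff_X_pow, coeff_one, n1, n2, n3, n4, n5]

private lemma hD_X_pow (k n : ℕ) :
    hasseDeriv k (X ^ n : F[X]) = monomial (n - k) ((n.choose k : ℕ) : F) := by
  rw [X_pow_eq_monomial, hasseDeriv_monomial, mul_one]

private lemma pow3_add {a b c : ℕ} (h : a + b = c) : (3:ℕ) ^ a * 3 ^ b = 3 ^ c := by
  rw [← pow_add, h]

private lemma pow3_mul_le {a b : ℕ} (h : a + 1 ≤ b) : 3 * 3 ^ a ≤ 3 ^ b := by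
  calc 3 * 3 ^ a = 3 ^ a * 3 := by ring
  _ = 3 ^ (a + 1) := (pow_succ 3 a).symm
  _ ≤ 3 ^ b := Nat.pow_le_pow_right (by norm_num) h

theorem stmt10 (s : ℕ) (hs : 1 ≤ s) (p : Polynomial F)
    (hp : p = pX ∨ p = pY s ∨ p = pZ s) :
    ell s * hasseDeriv (2 * q s + q0 s) p
    = hasseDeriv (q0 s + 1) p + hasseDeriv (q s + q0 s) p := by
  have hq0 : q0 s = 3 ^ s := rfl
  have hq : q s = 3 ^ (2 * s + 1) := rfl
  have h30 : (3:ℕ) ^ 0 = 1 := rfl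
  have hB : 3 ≤ 3 ^ s := by
    calc (3:ℕ) = 3 ^ 1 := rfl
    _ ≤ 3 ^ s := Nat.pow_le_pow_right (by norm_num) hs
  have hAB : 3 * 3 ^ s ≤ 3 ^ (2 * s + 1) := pow3_mul_le (by omega)
  have hCA : 3 * 3 ^ (2 * s + 1) ≤ 3 ^ (3 * s + 1) := pow3_mul_le (by omega)
  have hDC : 3 * 3 ^ (3 * s + 1) ≤ 3 ^ (4 * s + 2) := pow3_mul_le (by omega)
  obtain rfl | rfl | rfl := hp
  · -- p = pX
    rw [pX, hasseDeriv_X _ (by omega), hasseDeriv_X _ (by omega), hasseDeriv_X _ (by omega),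
      mul_zero, add_zero]
  · -- p = pY
    have E1 : q0 s + 1 = 3 ^ s + 3 ^ 0 := rfl
    have E2 : q s + q0 s = 3 ^ (2 * s + 1) + 3 ^ s := rfl
    have E3 : q s * (q0 s + 1) = 3 ^ (3 * s + 1) + 3 ^ (2 * s + 1) := by
      show 3 ^ (2 * s + 1) * (3 ^ s + 1) = _
      rw [Nat.mul_add, mul_one, pow3_add (show 2 * s + 1 + s = 3 * s + 1 by omega)]
    have E4 : q s * (q s + q0 s) = 3 ^ (4 * s + 2) + 3 ^ (3 * s + 1) := by
      show 3 ^ (2 * s + 1) * (3 ^ (2 * s + 1) + 3 ^ s) = _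
      rw [Nat.mul_add, pow3_add (show 2 * s + 1 + (2 * s + 1) = 4 * s + 2 by omega), pow3_add (show 2 * s + 1 + s = 3 * s + 1 by omega)]
    have hpY : pY s = X ^ (3 ^ s + 3 ^ 0) - X ^ (3 ^ (2 * s + 1) + 3 ^ s)
        + X ^ (3 ^ (3 * s + 1) + 3 ^ (2 * s + 1)) - X ^ (3 ^ (4 * s + 2) + 3 ^ (3 * s + 1)) := by
      rw [pY, E3, E4, E1, E2]
    have D1 : hasseDeriv (q0 s + 1) (pY s) = 1 := by
      have c1 : (((3 ^ s + 3 ^ 0).choose (q0 s + 1) : ℕ) : F) = 1 := by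
        rw [show (3:ℕ) ^ s + 3 ^ 0 = q0 s + 1 from rfl, Nat.choose_self]; norm_num
      have c2 : (((3 ^ (2 * s + 1) + 3 ^ s).choose (q0 s + 1) : ℕ) : F) = 0 :=
        chooseAB_zero (by omega) (by omega) (by omega) (by omega)
      have c3 : (((3 ^ (3 * s + 1) + 3 ^ (2 * s + 1)).choose (q0 s + 1) : ℕ) : F) = 0 :=
        chooseAB_zero (by omega) (by omega) (by omega) (by omega)
      have c4 : (((3 ^ (4 * s + 2) + 3 ^ (3 * s + 1)).choose (q0 s + 1) : ℕ) : F) = 0 :=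
        chooseAB_zero (by omega) (by omega) (by omega) (by omega)
      rw [hpY, map_sub, map_add, map_sub, hD_X_pow, hD_X_pow, hD_X_pow, hD_X_pow,
        c1, c2, c3, c4, show 3 ^ s + 3 ^ 0 - (q0 s + 1) = 0 by omega]
      simp
    have D2 : hasseDeriv (q s + q0 s) (pY s) = -1 := by
      have c1 : (((3 ^ s + 3 ^ 0).choose (q s + q0 s) : ℕ) : F) = 0 := by
        rw [Nat.choose_eq_zero_of_lt (by omega)]; norm_num
      have c2 : (((3 ^ (2 * s + 1) + 3 ^ s).choose (q s + q0 s) : ℕ) : F) = 1 := by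
        rw [show q s + q0 s = 3 ^ (2 * s + 1) + 3 ^ s from rfl, Nat.choose_self]; norm_num
      have c3 : (((3 ^ (3 * s + 1) + 3 ^ (2 * s + 1)).choose (q s + q0 s) : ℕ) : F) = 0 :=
        chooseAB_zero (by omega) (by omega) (by omega) (by omega)
      have c4 : (((3 ^ (4 * s + 2) + 3 ^ (3 * s + 1)).choose (q s + q0 s) : ℕ) : F) = 0 :=
        chooseAB_zero (by omega) (by omega) (by omega) (by omega)
      rw [hpY, map_sub, map_add, map_sub, hD_X_pow, hD_X_pow, hD_X_pow, hD_X_pow,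
        c1, c2, c3, c4, show 3 ^ (2 * s + 1) + 3 ^ s - (q s + q0 s) = 0 by omega]
      simp
    have D3 : hasseDeriv (2 * q s + q0 s) (pY s) = 0 := by
      have c1 : (((3 ^ s + 3 ^ 0).choose (2 * q s + q0 s) : ℕ) : F) = 0 := by
        rw [Nat.choose_eq_zero_of_lt (by omega)]; norm_num
      have c2 : (((3 ^ (2 * s + 1) + 3 ^ s).choose (2 * q s + q0 s) : ℕ) : F) = 0 := by
        rw [Nat.choose_eq_zero_of_lt (by omega)]; norm_num
      have c3 : (((3 ^ (3 * s + 1) + 3 ^ (2 * s + 1)).choose (2 * q s + q0 s) : ℕ) : F) = 0 :=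
        chooseAB_zero (by omega) (by omega) (by omega) (by omega)
      have c4 : (((3 ^ (4 * s + 2) + 3 ^ (3 * s + 1)).choose (2 * q s + q0 s) : ℕ) : F) = 0 :=
        chooseAB_zero (by omega) (by omega) (by omega) (by omega)
      rw [hpY, map_sub, map_add, map_sub, hD_X_pow, hD_X_pow, hD_X_pow, hD_X_pow,
        c1, c2, c3, c4]
      simp
    rw [D1, D2, D3, mul_zero]
    ring
  · -- p = pZ
    have X1 : 2 * q0 s + 1 = 3 ^ 0 + 2 * 3 ^ s := by omega
    have X2 : q s + 2 * q0 s = 3 ^ (2 * s + 1) + 2 * 3 ^ s := rfl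
    have X3 : q s * (2 * q0 s + 1) = 3 ^ (2 * s + 1) + 2 * 3 ^ (3 * s + 1) := by
      show 3 ^ (2 * s + 1) * (2 * 3 ^ s + 1) = _
      have h : (3:ℕ) ^ (2 * s + 1) * 3 ^ s = 3 ^ (3 * s + 1) := pow3_add (show 2 * s + 1 + s = 3 * s + 1 by omega)
      calc 3 ^ (2 * s + 1) * (2 * 3 ^ s + 1)
          = 3 ^ (2 * s + 1) + 2 * (3 ^ (2 * s + 1) * 3 ^ s) := by ring
      _ = _ := by rw [h]
    have X4 : q s * (q s + 2 * q0 s) = 3 ^ (4 * s + 2) + 2 * 3 ^ (3 * s + 1) := by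
      show 3 ^ (2 * s + 1) * (3 ^ (2 * s + 1) + 2 * 3 ^ s) = _
      have h : (3:ℕ) ^ (2 * s + 1) * 3 ^ s = 3 ^ (3 * s + 1) := pow3_add (show 2 * s + 1 + s = 3 * s + 1 by omega)
      have h' : (3:ℕ) ^ (2 * s + 1) * 3 ^ (2 * s + 1) = 3 ^ (4 * s + 2) := pow3_add (show 2 * s + 1 + (2 * s + 1) = 4 * s + 2 by omega)
      calc 3 ^ (2 * s + 1) * (3 ^ (2 * s + 1) + 2 * 3 ^ s)
          = 3 ^ (2 * s + 1) * 3 ^ (2 * s + 1) + 2 * (3 ^ (2 * s + 1) * 3 ^ s) := by ring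
      _ = _ := by rw [h, h']
    have hpZ : pZ s = X ^ (3 ^ 0 + 2 * 3 ^ s) - X ^ (3 ^ (2 * s + 1) + 2 * 3 ^ s)
        + X ^ (3 ^ (2 * s + 1) + 2 * 3 ^ (3 * s + 1))
        - X ^ (3 ^ (4 * s + 2) + 2 * 3 ^ (3 * s + 1)) := by
      rw [pZ, X3, X4, X1, X2]
    have D1 : hasseDeriv (q0 s + 1) (pZ s) = monomial (3 ^ s) 2 := by
      have c1 : (((3 ^ 0 + 2 * 3 ^ s).choose (q0 s + 1) : ℕ) : F) = 2 := by
        rw [show q0 s + 1 = 3 ^ 0 + 3 ^ s by omega]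
        exact chooseA2B_two (by omega)
      have c2 : (((3 ^ (2 * s + 1) + 2 * 3 ^ s).choose (q0 s + 1) : ℕ) : F) = 0 :=
        chooseA2B_zero (by omega) (by omega) (by omega) (by omega) (by omega) (by omega)
      have c3 : (((3 ^ (2 * s + 1) + 2 * 3 ^ (3 * s + 1)).choose (q0 s + 1) : ℕ) : F) = 0 :=
        chooseA2B_zero (by omega) (by omega) (by omega) (by omega) (by omega) (by omega)
      have c4 : (((3 ^ (4 * s + 2) + 2 * 3 ^ (3 * s + 1)).choose (q0 s + 1) : ℕ) : F) = 0 :=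
        chooseA2B_zero (by omega) (by omega) (by omega) (by omega) (by omega) (by omega)
      rw [hpZ, map_sub, map_add, map_sub, hD_X_pow, hD_X_pow, hD_X_pow, hD_X_pow,
        c1, c2, c3, c4, show 3 ^ 0 + 2 * 3 ^ s - (q0 s + 1) = 3 ^ s by omega]
      simp
    have D2 : hasseDeriv (q s + q0 s) (pZ s) = -monomial (3 ^ s) 2 := by
      have c1 : (((3 ^ 0 + 2 * 3 ^ s).choose (q s + q0 s) : ℕ) : F) = 0 := by
        rw [Nat.choose_eq_zero_of_lt (by omega)]; norm_num
      have c2 : (((3 ^ (2 * s + 1) + 2 * 3 ^ s).choose (q s + q0 s) : ℕ) : F) = 2 := by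
        rw [show q s + q0 s = 3 ^ (2 * s + 1) + 3 ^ s from rfl]
        exact chooseA2B_two (by omega)
      have c3 : (((3 ^ (2 * s + 1) + 2 * 3 ^ (3 * s + 1)).choose (q s + q0 s) : ℕ) : F) = 0 :=
        chooseA2B_zero (by omega) (by omega) (by omega) (by omega) (by omega) (by omega)
      have c4 : (((3 ^ (4 * s + 2) + 2 * 3 ^ (3 * s + 1)).choose (q s + q0 s) : ℕ) : F) = 0 :=
        chooseA2B_zero (by omega) (by omega) (by omega) (by omega) (by omega) (by omega)
      rw [hpZ, map_sub, map_add, map_sub, hD_X_pow, hD_X_pow, hD_X_pow, hD_X_pow,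
        c1, c2, c3, c4, show 3 ^ (2 * s + 1) + 2 * 3 ^ s - (q s + q0 s) = 3 ^ s by omega]
      simp
    have D3 : hasseDeriv (2 * q s + q0 s) (pZ s) = 0 := by
      have c1 : (((3 ^ 0 + 2 * 3 ^ s).choose (2 * q s + q0 s) : ℕ) : F) = 0 := by
        rw [Nat.choose_eq_zero_of_lt (by omega)]; norm_num
      have c2 : (((3 ^ (2 * s + 1) + 2 * 3 ^ s).choose (2 * q s + q0 s) : ℕ) : F) = 0 := by
        rw [Nat.choose_eq_zero_of_lt (by omega)]; norm_num
      have c3 : (((3 ^ (2 * s + 1) + 2 * 3 ^ (3 * s + 1)).choose (2 * q s + q0 s) : ℕ) : F) = 0 :=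
        chooseA2B_zero (by omega) (by omega) (by omega) (by omega) (by omega) (by omega)
      have c4 : (((3 ^ (4 * s + 2) + 2 * 3 ^ (3 * s + 1)).choose (2 * q s + q0 s) : ℕ) : F) = 0 :=
        chooseA2B_zero (by omega) (by omega) (by omega) (by omega) (by omega) (by omega)
      rw [hpZ, map_sub, map_add, map_sub, hD_X_pow, hD_X_pow, hD_X_pow, hD_X_pow,
        c1, c2, c3, c4]
      simp
    rw [D1, D2, D3, mul_zero]
    ring
end
end

section
/- (Differential equation (A8) for the coordinate functions x, y, z of the Ree curve.) For each p ∈ {p_x, p_y, p_z}, the identity ℓ^q0 * D^(q*q0+q0) p + ℓ^(2q0) * D^(q*q0+2q0) p + ℓ^(3q0) * D^(q*q0+3q0) p = ℓ * D^(q*q0+1) p holds in F[X]. -/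
noncomputable section

open Polynomial

lemma choose3_eq_zero {n k t : ℕ} (h : n / 3 ^ t % 3 < k / 3 ^ t % 3) :
    ((n.choose k : F)) = 0 := by
  have : Fact (Nat.Prime 3) := ⟨by norm_num⟩
  have H := Choose.choose_modEq_choose_mul_prod_range_choose (p := 3) (n := n) (k := k) (t + 1)
  have h2 := (ZMod.intCast_eq_intCast_iff _ _ _).mpr H
  push_cast at h2
  rw [Finset.prod_eq_zero (Finset.self_mem_range_succ t)
      (by rw [Nat.choose_eq_zero_of_lt h]; simp)] at h2
  simpa using h2

lemma dig {n t A c B : ℕ} (hn : n = 3 ^ t * (3 * A + c) + B) (hc : c < 3) (hB : B < 3 ^ t) :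
    n / 3 ^ t % 3 = c := by
  subst hn
  rw [Nat.mul_add_div (by positivity), Nat.div_eq_of_lt hB, Nat.add_zero,
    Nat.mul_add_mod, Nat.mod_eq_of_lt hc]

lemma dig0 {n t : ℕ} (h : 3 ^ (t + 1) ∣ n) : n / 3 ^ t % 3 = 0 := by
  obtain ⟨w, rfl⟩ := h
  exact dig (A := w) (B := 0) (by ring) (by norm_num) (by positivity)

lemma key {n k t : ℕ} (h : n / 3 ^ t % 3 < k / 3 ^ t % 3) :
    hasseDeriv k (X ^ n : Polynomial F) = 0 := by
  rw [X_pow_eq_monomial, hasseDeriv_monomial, choose3_eq_zero h, zero_mul, monomial_zero_right]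

theorem stmt14 (s : ℕ) (hs : 1 ≤ s) (p : Polynomial F)
    (hp : p = pX ∨ p = pY s ∨ p = pZ s) :
    ell s ^ q0 s * hasseDeriv (q s * q0 s + q0 s) p
      + ell s ^ (2 * q0 s) * hasseDeriv (q s * q0 s + 2 * q0 s) p
      + ell s ^ (3 * q0 s) * hasseDeriv (q s * q0 s + 3 * q0 s) p
    = ell s * hasseDeriv (q s * q0 s + 1) p := by
  obtain ⟨u, rfl⟩ : ∃ u, s = u + 1 := ⟨s - 1, by omega⟩
  clear hs
  -- bounds
  have hp33 : 0 < (3:ℕ) ^ (3*u+3) := by positivity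
  have hb3 : q (u+1) ≤ 3 ^ (3*u+3) := by
    have : q (u+1) = 3 ^ (2*u+3) := by unfold q; ring
    rw [this]; exact Nat.pow_le_pow_right (by norm_num) (by omega)
  have hb4 : q0 (u+1) < 3 ^ (3*u+3) := by
    have : q0 (u+1) = 3 ^ (u+1) := rfl
    rw [this]; exact Nat.pow_lt_pow_right (by norm_num) (by omega)
  have hb5 : (3:ℕ) ^ (3*u+4) = 3 * 3 ^ (3*u+3) := by ring
  -- digits of the derivative orders
  have dK1 : (q (u+1) * q0 (u+1) + q0 (u+1)) / 3 ^ (u+1) % 3 = 1 :=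
    dig (A := 3 ^ (2*u+2)) (B := 0) (by simp only [q, q0]; ring) (by norm_num) (by positivity)
  have dK2 : (q (u+1) * q0 (u+1) + 2 * q0 (u+1)) / 3 ^ (u+1) % 3 = 2 :=
    dig (A := 3 ^ (2*u+2)) (B := 0) (by simp only [q, q0]; ring) (by norm_num) (by positivity)
  have dK3 : (q (u+1) * q0 (u+1) + 3 * q0 (u+1)) / 3 ^ (u+2) % 3 = 1 :=
    dig (A := 3 ^ (2*u+1)) (B := 0) (by simp only [q, q0]; ring) (by norm_num) (by positivity)
  have dK4 : (q (u+1) * q0 (u+1) + 1) / 3 ^ 0 % 3 = 1 :=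
    dig (A := 3 ^ (3*u+3)) (B := 0) (by simp only [q, q0]; ring) (by norm_num) (by positivity)
  have dK1' : (q (u+1) * q0 (u+1) + q0 (u+1)) / 3 ^ (3*u+4) % 3 = 1 :=
    dig (A := 0) (B := q0 (u+1)) (by simp only [q, q0]; ring) (by norm_num) (by omega)
  have dK2' : (q (u+1) * q0 (u+1) + 2 * q0 (u+1)) / 3 ^ (3*u+4) % 3 = 1 :=
    dig (A := 0) (B := 2 * q0 (u+1)) (by simp only [q, q0]; ring) (by norm_num) (by omega)
  have dK3' : (q (u+1) * q0 (u+1) + 3 * q0 (u+1)) / 3 ^ (3*u+4) % 3 = 1 :=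
    dig (A := 0) (B := 3 * q0 (u+1)) (by simp only [q, q0]; ring) (by norm_num) (by omega)
  have dK4' : (q (u+1) * q0 (u+1) + 1) / 3 ^ (3*u+4) % 3 = 1 :=
    dig (A := 0) (B := 1) (by simp only [q, q0]; ring) (by norm_num) (by omega)
  -- digits of small exponents
  have dX : 1 / 3 ^ (3*u+4) % 3 = 0 :=
    dig (A := 0) (c := 0) (B := 1) (by ring) (by norm_num) (by omega)
  have dY1 : (q0 (u+1) + 1) / 3 ^ (3*u+4) % 3 = 0 :=
    dig (A := 0) (c := 0) (B := q0 (u+1) + 1) (by ring) (by norm_num) (by omega)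
  have dY2 : (q (u+1) + q0 (u+1)) / 3 ^ (3*u+4) % 3 = 0 :=
    dig (A := 0) (c := 0) (B := q (u+1) + q0 (u+1)) (by ring) (by norm_num) (by omega)
  have dZ1 : (2 * q0 (u+1) + 1) / 3 ^ (3*u+4) % 3 = 0 :=
    dig (A := 0) (c := 0) (B := 2 * q0 (u+1) + 1) (by ring) (by norm_num) (by omega)
  have dZ2 : (q (u+1) + 2 * q0 (u+1)) / 3 ^ (3*u+4) % 3 = 0 :=
    dig (A := 0) (c := 0) (B := q (u+1) + 2 * q0 (u+1)) (by ring) (by norm_num) (by omega)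
  -- digits of big exponents: all zero in low positions
  have dY3 : ∀ t : ℕ, t ≤ u + 2 → (q (u+1) * (q0 (u+1) + 1)) / 3 ^ t % 3 = 0 := fun t ht =>
    dig0 (dvd_trans (pow_dvd_pow 3 (show t + 1 ≤ u + 3 by omega))
      ⟨3 ^ u * (3 ^ (u+1) + 1), by simp only [q, q0]; ring⟩)
  have dY4 : ∀ t : ℕ, t ≤ u + 2 → (q (u+1) * (q (u+1) + q0 (u+1))) / 3 ^ t % 3 = 0 := fun t ht =>
    dig0 (dvd_trans (pow_dvd_pow 3 (show t + 1 ≤ u + 3 by omega))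
      ⟨3 ^ u * (3 ^ (2*u+3) + 3 ^ (u+1)), by simp only [q, q0]; ring⟩)
  have dZ3 : ∀ t : ℕ, t ≤ u + 2 → (q (u+1) * (2 * q0 (u+1) + 1)) / 3 ^ t % 3 = 0 := fun t ht =>
    dig0 (dvd_trans (pow_dvd_pow 3 (show t + 1 ≤ u + 3 by omega))
      ⟨3 ^ u * (2 * 3 ^ (u+1) + 1), by simp only [q, q0]; ring⟩)
  have dZ4 : ∀ t : ℕ, t ≤ u + 2 → (q (u+1) * (q (u+1) + 2 * q0 (u+1))) / 3 ^ t % 3 = 0 := fun t ht =>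
    dig0 (dvd_trans (pow_dvd_pow 3 (show t + 1 ≤ u + 3 by omega))
      ⟨3 ^ u * (3 ^ (2*u+3) + 2 * 3 ^ (u+1)), by simp only [q, q0]; ring⟩)
  rcases hp with rfl | rfl | rfl
  · have e : (pX : Polynomial F) = X ^ 1 := by rw [pX, pow_one]
    rw [e,
      key (n := 1) (t := 3*u+4) (by rw [dX, dK1']; norm_num),
      key (n := 1) (t := 3*u+4) (by rw [dX, dK2']; norm_num),
      key (n := 1) (t := 3*u+4) (by rw [dX, dK3']; norm_num),
      key (n := 1) (t := 3*u+4) (by rw [dX, dK4']; norm_num)]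
    simp
  · have y1 : hasseDeriv (q (u+1) * q0 (u+1) + q0 (u+1)) (pY (u+1)) = 0 := by
      simp only [pY, map_sub, map_add]
      rw [key (t := 3*u+4) (by rw [dY1, dK1']; norm_num),
        key (t := 3*u+4) (by rw [dY2, dK1']; norm_num),
        key (t := u+1) (by rw [dY3 (u+1) (by omega), dK1]; norm_num),
        key (t := u+1) (by rw [dY4 (u+1) (by omega), dK1]; norm_num)]
      simp
    have y2 : hasseDeriv (q (u+1) * q0 (u+1) + 2 * q0 (u+1)) (pY (u+1)) = 0 := by
      simp only [pY, map_sub, map_add]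
      rw [key (t := 3*u+4) (by rw [dY1, dK2']; norm_num),
        key (t := 3*u+4) (by rw [dY2, dK2']; norm_num),
        key (t := u+1) (by rw [dY3 (u+1) (by omega), dK2]; norm_num),
        key (t := u+1) (by rw [dY4 (u+1) (by omega), dK2]; norm_num)]
      simp
    have y3 : hasseDeriv (q (u+1) * q0 (u+1) + 3 * q0 (u+1)) (pY (u+1)) = 0 := by
      simp only [pY, map_sub, map_add]
      rw [key (t := 3*u+4) (by rw [dY1, dK3']; norm_num),
        key (t := 3*u+4) (by rw [dY2, dK3']; norm_num),
        key (t := u+2) (by rw [dY3 (u+2) (by omega), dK3]; norm_num),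
        key (t := u+2) (by rw [dY4 (u+2) (by omega), dK3]; norm_num)]
      simp
    have y4 : hasseDeriv (q (u+1) * q0 (u+1) + 1) (pY (u+1)) = 0 := by
      simp only [pY, map_sub, map_add]
      rw [key (t := 3*u+4) (by rw [dY1, dK4']; norm_num),
        key (t := 3*u+4) (by rw [dY2, dK4']; norm_num),
        key (t := 0) (by rw [dY3 0 (by omega), dK4]; norm_num),
        key (t := 0) (by rw [dY4 0 (by omega), dK4]; norm_num)]
      simp
    rw [y1, y2, y3, y4]; simp
  · have z1 : hasseDeriv (q (u+1) * q0 (u+1) + q0 (u+1)) (pZ (u+1)) = 0 := by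
      simp only [pZ, map_sub, map_add]
      rw [key (t := 3*u+4) (by rw [dZ1, dK1']; norm_num),
        key (t := 3*u+4) (by rw [dZ2, dK1']; norm_num),
        key (t := u+1) (by rw [dZ3 (u+1) (by omega), dK1]; norm_num),
        key (t := u+1) (by rw [dZ4 (u+1) (by omega), dK1]; norm_num)]
      simp
    have z2 : hasseDeriv (q (u+1) * q0 (u+1) + 2 * q0 (u+1)) (pZ (u+1)) = 0 := by
      simp only [pZ, map_sub, map_add]
      rw [key (t := 3*u+4) (by rw [dZ1, dK2']; norm_num),
        key (t := 3*u+4) (by rw [dZ2, dK2']; norm_num),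
        key (t := u+1) (by rw [dZ3 (u+1) (by omega), dK2]; norm_num),
        key (t := u+1) (by rw [dZ4 (u+1) (by omega), dK2]; norm_num)]
      simp
    have z3 : hasseDeriv (q (u+1) * q0 (u+1) + 3 * q0 (u+1)) (pZ (u+1)) = 0 := by
      simp only [pZ, map_sub, map_add]
      rw [key (t := 3*u+4) (by rw [dZ1, dK3']; norm_num),
        key (t := 3*u+4) (by rw [dZ2, dK3']; norm_num),
        key (t := u+2) (by rw [dZ3 (u+2) (by omega), dK3]; norm_num),
        key (t := u+2) (by rw [dZ4 (u+2) (by omega), dK3]; norm_num)]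
      simp
    have z4 : hasseDeriv (q (u+1) * q0 (u+1) + 1) (pZ (u+1)) = 0 := by
      simp only [pZ, map_sub, map_add]
      rw [key (t := 3*u+4) (by rw [dZ1, dK4']; norm_num),
        key (t := 3*u+4) (by rw [dZ2, dK4']; norm_num),
        key (t := 0) (by rw [dZ3 0 (by omega), dK4]; norm_num),
        key (t := 0) (by rw [dZ4 0 (by omega), dK4]; norm_num)]
      simp
    rw [z1, z2, z3, z4]; simp
end
end

section
/- (The relations D^(k*q0) f = -(x^q - x) * D^(k*q0+1) f, derived from the fact that the second order of the Frobenius linear series exceeds 1, in the cases f = x, y, z.) For each p ∈ {p_x, p_y, p_z} and each k ∈ {1, 2, 3}, the identity D^(k*q0) p = -ℓ * D^(k*q0+1) p holds in F[X]. -/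
noncomputable section

open Polynomial

lemma lucas1 (n k : ℕ) :
    ((n.choose k : F)) = ((n % 3).choose (k % 3) : F) * ((n / 3).choose (k / 3) : F) := by
  have h := Choose.choose_modEq_choose_mod_mul_choose_div (p := 3) (n := n) (k := k)
  have h2 := (ZMod.intCast_eq_intCast_iff _ _ _).mpr h
  push_cast at h2
  exact_mod_cast h2

lemma lucasBlock (m : ℕ) : ∀ (α β γ δ : ℕ), α < 3^m → γ < 3^m →
    (((α + 3^m*β).choose (γ + 3^m*δ) : F)) = (α.choose γ : F) * (β.choose δ : F) := by
  induction m with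
  | zero =>
    intro α β γ δ hα hγ
    interval_cases α
    interval_cases γ
    simp
  | succ m ih =>
    intro α β γ δ hα hγ
    have h3 : (0:ℕ) < 3 := by norm_num
    have e1 : (α + 3^(m+1)*β) % 3 = α % 3 := by
      rw [pow_succ, mul_comm ((3:ℕ)^m) 3, mul_assoc, Nat.add_mul_mod_self_left]
    have e2 : (α + 3^(m+1)*β) / 3 = α/3 + 3^m*β := by
      rw [pow_succ, mul_comm ((3:ℕ)^m) 3, mul_assoc, Nat.add_mul_div_left _ _ h3]
    have e3 : (γ + 3^(m+1)*δ) % 3 = γ % 3 := by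
      rw [pow_succ, mul_comm ((3:ℕ)^m) 3, mul_assoc, Nat.add_mul_mod_self_left]
    have e4 : (γ + 3^(m+1)*δ) / 3 = γ/3 + 3^m*δ := by
      rw [pow_succ, mul_comm ((3:ℕ)^m) 3, mul_assoc, Nat.add_mul_div_left _ _ h3]
    have hα' : α/3 < 3^m := Nat.div_lt_of_lt_mul (by rw [← pow_succ']; exact hα)
    have hγ' : γ/3 < 3^m := Nat.div_lt_of_lt_mul (by rw [← pow_succ']; exact hγ)
    rw [lucas1, e1, e2, e3, e4, ih _ β _ δ hα' hγ', lucas1 α γ]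
    ring

lemma castpow3_s17 (s : ℕ) (hs : 1 ≤ s) : ((3^s : ℕ) : F) = 0 := by
  push_cast
  have h3 : (3 : F) = 0 := by decide
  rw [h3, zero_pow (by omega)]

lemma hD (i n : ℕ) : hasseDeriv i (X^n : Polynomial F) = C ((n.choose i : F)) * X^(n-i) := by
  rw [X_pow_eq_monomial, hasseDeriv_monomial, mul_one, C_mul_X_pow_eq_monomial]

lemma rowSmall (s : ℕ) (hs : 1 ≤ s) (c d e' e : ℕ) (he' : e' ≤ 1) (he : e ≤ 1) :
    ((e' + c * 3^s).choose (e + d * 3^s) : F) = (e'.choose e : F) * (c.choose d : F) := by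
  have h1 : 1 < 3^s := Nat.one_lt_pow (by omega) (by norm_num)
  have h := lucasBlock s e' c e d (by omega) (by omega)
  rw [mul_comm ((3:ℕ)^s) c] at h
  rw [mul_comm ((3:ℕ)^s) d] at h
  exact h

lemma chooseMid (s c d : ℕ) (hc : c < 3) (hd : d < 3) :
    ((3^(s+1) + c).choose d : F) = (c.choose d : F) := by
  have h := lucasBlock 1 c (3^s) d 0 (by simpa using hc) (by simpa using hd)
  simp only [pow_one, mul_zero, add_zero, Nat.choose_zero_right, Nat.cast_one, mul_one] at h
  rw [show (3:ℕ)^(s+1) + c = c + 3 * 3^s by rw [pow_succ']; ring] at *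
  exact h

lemma rowN2 (s : ℕ) (hs : 1 ≤ s) (c d e : ℕ) (hc : c < 3) (hd : d < 3) (he : e ≤ 1) :
    ((3^(2*s+1) + c * 3^s).choose (e + d * 3^s) : F) = (Nat.choose 0 e : F) * (c.choose d : F) := by
  have h1 : 1 < 3^s := Nat.one_lt_pow (by omega) (by norm_num)
  have key : 3^(2*s+1) + c*3^s = 0 + 3^s * (3^(s+1) + c) := by
    rw [show 2*s+1 = s + (s+1) by omega, pow_add]; ring
  rw [key, show e + d*3^s = e + 3^s * d by ring,
    lucasBlock s 0 (3^(s+1)+c) e d (by omega) (by omega), chooseMid s c d hc hd]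

lemma rowN2big (s : ℕ) (hs : 1 ≤ s) (c e : ℕ) (hc : c < 3) (he : e ≤ 1) :
    ((3^(2*s+1) + c * 3^s).choose (e + 3 * 3^s) : F) = 0 := by
  have h1 : 1 < 3^s := Nat.one_lt_pow (by omega) (by norm_num)
  have hcs : c * 3^s < 3^(s+1) := by
    have : c * 3^s ≤ 2 * 3^s := Nat.mul_le_mul_right _ (by omega)
    rw [pow_succ']
    generalize (3:ℕ)^s = T at *
    omega
  have hes : e < 3^(s+1) := by
    have : 3^s ≤ 3^(s+1) := Nat.pow_le_pow_right (by norm_num) (by omega)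
    omega
  rw [show 3^(2*s+1) + c*3^s = c * 3^s + 3^(s+1) * 3^s by
      rw [show 2*s+1 = (s+1) + s by omega, pow_add]; ring,
    show e + 3 * 3^s = e + 3^(s+1) * 1 by rw [pow_succ']; ring,
    lucasBlock (s+1) _ _ _ _ hcs hes]
  simp [Nat.choose_one_right, castpow3_s17 s hs]

lemma rowN1big (s : ℕ) (hs : 1 ≤ s) (c e' e : ℕ) (hc : c ≤ 2) (he' : e' ≤ 1) (he : e ≤ 1) :
    ((e' + c * 3^s).choose (e + 3 * 3^s) : F) = 0 := by
  have h1 : 1 < 3^s := Nat.one_lt_pow (by omega) (by norm_num)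
  have hcs : c * 3^s ≤ 2 * 3^s := Nat.mul_le_mul_right _ (by omega)
  rw [Nat.choose_eq_zero_of_lt (by generalize (3:ℕ)^s = T at *; omega)]
  simp

lemma chooseZero (s W i : ℕ) (hs : 1 ≤ s) (hi : 0 < i) (hi' : i ≤ 3^(s+1)+1) :
    ((3^(s+1) * (3^s * W)).choose i : F) = 0 := by
  have hP : 2 ≤ 3^(s+1) := by
    have : 3^1 ≤ 3^(s+1) := Nat.pow_le_pow_right (by norm_num) (by omega)
    omega
  have hd := Nat.mod_add_div i (3^(s+1))
  have hm : i % 3^(s+1) < 3^(s+1) := Nat.mod_lt _ (by omega)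
  have h := lucasBlock (s+1) 0 (3^s*W) (i % 3^(s+1)) (i / 3^(s+1)) (by omega) hm
  rw [zero_add, hd] at h
  rw [h]
  by_cases hγ : i % 3^(s+1) = 0
  · have hδ : i / 3^(s+1) = 1 := by
      rcases hq : i / 3^(s+1) with _ | _ | d
      · rw [hq, hγ] at hd; omega
      · rfl
      · exfalso
        rw [hq, hγ] at hd
        have h2 : 3^(s+1) * 2 ≤ 3^(s+1) * (d+1+1) := Nat.mul_le_mul_left _ (by omega)
        set P := (3:ℕ)^(s+1) with hPdef
        set Q := P * (d+1+1) with hQdef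
        omega
    rw [hγ, hδ, Nat.choose_self, Nat.choose_one_right, Nat.cast_one, one_mul,
      Nat.cast_mul, castpow3_s17 s hs, zero_mul]
  · rw [Nat.choose_eq_zero_of_lt (by omega)]
    simp

lemma rowQmul (s W i : ℕ) (hs : 1 ≤ s) (hi : 0 < i) (hi' : i ≤ 3*3^s + 1) :
    ((3^(2*s+1) * W).choose i : F) = 0 := by
  rw [show (3:ℕ)^(2*s+1) * W = 3^(s+1) * (3^s * W) by
    rw [show 2*s+1 = (s+1)+s by omega, pow_add]; ring]
  exact chooseZero s W i hs hi (by rw [pow_succ']; omega)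

theorem stmt17 (s : ℕ) (hs : 1 ≤ s) (p : Polynomial F)
    (hp : p = pX ∨ p = pY s ∨ p = pZ s) (k : ℕ) (hk : k = 1 ∨ k = 2 ∨ k = 3) :
    hasseDeriv (k * q0 s) p = -(ell s) * hasseDeriv (k * q0 s + 1) p := by
  have h3 : 3 ≤ 3^s := by
    calc (3:ℕ) = 3^1 := (pow_one 3).symm
    _ ≤ 3^s := Nat.pow_le_pow_right (by norm_num) hs
  rcases hp with rfl | rfl | rfl
  · -- p = pX
    have h1 : 1 < k * q0 s := by
      simp only [q0]
      rcases hk with rfl | rfl | rfl <;> omega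
    rw [pX, hasseDeriv_X _ h1, hasseDeriv_X _ (by omega), mul_zero]
  · -- p = pY
    rcases hk with rfl | rfl | rfl
    · simp only [pY, ell, q, q0, one_mul, map_sub, map_add, hD]
      rw [rowQmul s _ _ hs (by omega) (by omega), rowQmul s _ _ hs (by omega) (by omega),
        rowQmul s _ _ hs (by omega) (by omega), rowQmul s _ _ hs (by omega) (by omega)]
      simp only [map_zero, zero_mul, add_zero, sub_zero]
      have c1 : ((3^s + 1).choose (3^s) : F) = 1 := by
        have h := rowSmall s hs 1 1 1 0 le_rfl (by norm_num)
        rw [show 1 + 1*3^s = 3^s+1 by ring, show 0 + 1*3^s = (3:ℕ)^s by ring,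
          show ((Nat.choose 1 0 : F)) * (Nat.choose 1 1 : F) = 1 by norm_num] at h
        exact h
      have c2 : ((3^(2*s+1) + 3^s).choose (3^s) : F) = 1 := by
        have h := rowN2 s hs 1 1 0 (by norm_num) (by norm_num) (by norm_num)
        rw [show (3:ℕ)^(2*s+1) + 1*3^s = 3^(2*s+1)+3^s by ring, show 0 + 1*3^s = (3:ℕ)^s by ring,
          show ((Nat.choose 0 0 : F)) * (Nat.choose 1 1 : F) = 1 by norm_num] at h
        exact h
      have c4 : ((3^(2*s+1) + 3^s).choose (3^s + 1) : F) = 0 := by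
        have h := rowN2 s hs 1 1 1 (by norm_num) (by norm_num) (by norm_num)
        rw [show (3:ℕ)^(2*s+1) + 1*3^s = 3^(2*s+1)+3^s by ring, show 1 + 1*3^s = 3^s+1 by ring,
          show ((Nat.choose 0 1 : F)) * (Nat.choose 1 1 : F) = 0 by norm_num] at h
        exact h
      rw [c1, c2, c4]
      simp only [Nat.choose_self, Nat.cast_one, map_one, one_mul, map_zero, zero_mul, sub_zero]
      rw [show (3:ℕ)^s+1-3^s = 1 by omega, Nat.add_sub_cancel, Nat.sub_self]
      ring
    · simp only [pY, ell, q, q0, map_sub, map_add, hD]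
      rw [rowQmul s _ _ hs (by omega) (by omega), rowQmul s _ _ hs (by omega) (by omega),
        rowQmul s _ _ hs (by omega) (by omega), rowQmul s _ _ hs (by omega) (by omega)]
      have c1 : ((3^s + 1).choose (2*3^s) : F) = 0 := by
        have h := rowSmall s hs 1 2 1 0 le_rfl (by norm_num)
        rw [show 1 + 1*3^s = 3^s+1 by ring, show 0 + 2*3^s = 2*(3:ℕ)^s by ring,
          show ((Nat.choose 1 0 : F)) * (Nat.choose 1 2 : F) = 0 by norm_num] at h
        exact h
      have c2 : ((3^(2*s+1) + 3^s).choose (2*3^s) : F) = 0 := by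
        have h := rowN2 s hs 1 2 0 (by norm_num) (by norm_num) (by norm_num)
        rw [show (3:ℕ)^(2*s+1) + 1*3^s = 3^(2*s+1)+3^s by ring, show 0 + 2*3^s = 2*(3:ℕ)^s by ring,
          show ((Nat.choose 0 0 : F)) * (Nat.choose 1 2 : F) = 0 by norm_num] at h
        exact h
      have c3 : ((3^s + 1).choose (2*3^s + 1) : F) = 0 := by
        have h := rowSmall s hs 1 2 1 1 le_rfl le_rfl
        rw [show 1 + 1*3^s = 3^s+1 by ring, show 1 + 2*3^s = 2*(3:ℕ)^s+1 by ring,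
          show ((Nat.choose 1 1 : F)) * (Nat.choose 1 2 : F) = 0 by norm_num] at h
        exact h
      have c4 : ((3^(2*s+1) + 3^s).choose (2*3^s + 1) : F) = 0 := by
        have h := rowN2 s hs 1 2 1 (by norm_num) (by norm_num) (by norm_num)
        rw [show (3:ℕ)^(2*s+1) + 1*3^s = 3^(2*s+1)+3^s by ring, show 1 + 2*3^s = 2*(3:ℕ)^s+1 by ring,
          show ((Nat.choose 0 1 : F)) * (Nat.choose 1 2 : F) = 0 by norm_num] at h
        exact h
      rw [c1, c2, c3, c4]
      simp
    · simp only [pY, ell, q, q0, map_sub, map_add, hD]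
      rw [rowQmul s _ _ hs (by omega) (by omega), rowQmul s _ _ hs (by omega) (by omega),
        rowQmul s _ _ hs (by omega) (by omega), rowQmul s _ _ hs (by omega) (by omega)]
      have c1 : ((3^s + 1).choose (3*3^s) : F) = 0 := by
        have h := rowN1big s hs 1 1 0 (by norm_num) le_rfl (by norm_num)
        rw [show 1 + 1*3^s = 3^s+1 by ring, show 0 + 3*3^s = 3*(3:ℕ)^s by ring] at h
        exact h
      have c2 : ((3^(2*s+1) + 3^s).choose (3*3^s) : F) = 0 := by
        have h := rowN2big s hs 1 0 (by norm_num) (by norm_num)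
        rw [show (3:ℕ)^(2*s+1) + 1*3^s = 3^(2*s+1)+3^s by ring,
          show 0 + 3*3^s = 3*(3:ℕ)^s by ring] at h
        exact h
      have c3 : ((3^s + 1).choose (3*3^s + 1) : F) = 0 := by
        have h := rowN1big s hs 1 1 1 (by norm_num) le_rfl le_rfl
        rw [show 1 + 1*3^s = 3^s+1 by ring, show 1 + 3*3^s = 3*(3:ℕ)^s+1 by ring] at h
        exact h
      have c4 : ((3^(2*s+1) + 3^s).choose (3*3^s + 1) : F) = 0 := by
        have h := rowN2big s hs 1 1 (by norm_num) le_rfl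
        rw [show (3:ℕ)^(2*s+1) + 1*3^s = 3^(2*s+1)+3^s by ring,
          show 1 + 3*3^s = 3*(3:ℕ)^s+1 by ring] at h
        exact h
      rw [c1, c2, c3, c4]
      simp
  · -- p = pZ
    rcases hk with rfl | rfl | rfl
    · simp only [pZ, ell, q, q0, one_mul, map_sub, map_add, hD]
      rw [rowQmul s _ _ hs (by omega) (by omega), rowQmul s _ _ hs (by omega) (by omega),
        rowQmul s _ _ hs (by omega) (by omega), rowQmul s _ _ hs (by omega) (by omega)]
      simp only [map_zero, zero_mul, add_zero, sub_zero]
      have c1 : ((2*3^s + 1).choose (3^s) : F) = 2 := by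
        have h := rowSmall s hs 2 1 1 0 le_rfl (by norm_num)
        rw [show 1 + 2*3^s = 2*3^s+1 by ring, show 0 + 1*3^s = (3:ℕ)^s by ring,
          show ((Nat.choose 1 0 : F)) * (Nat.choose 2 1 : F) = 2 by norm_num] at h
        exact h
      have c2 : ((3^(2*s+1) + 2*3^s).choose (3^s) : F) = 2 := by
        have h := rowN2 s hs 2 1 0 (by norm_num) (by norm_num) (by norm_num)
        rw [show 0 + 1*3^s = (3:ℕ)^s by ring,
          show ((Nat.choose 0 0 : F)) * (Nat.choose 2 1 : F) = 2 by norm_num] at h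
        exact h
      have c3 : ((2*3^s + 1).choose (3^s + 1) : F) = 2 := by
        have h := rowSmall s hs 2 1 1 1 le_rfl le_rfl
        rw [show 1 + 2*3^s = 2*3^s+1 by ring, show 1 + 1*3^s = (3:ℕ)^s+1 by ring,
          show ((Nat.choose 1 1 : F)) * (Nat.choose 2 1 : F) = 2 by norm_num] at h
        exact h
      have c4 : ((3^(2*s+1) + 2*3^s).choose (3^s + 1) : F) = 0 := by
        have h := rowN2 s hs 2 1 1 (by norm_num) (by norm_num) (by norm_num)
        rw [show 1 + 1*3^s = (3:ℕ)^s+1 by ring,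
          show ((Nat.choose 0 1 : F)) * (Nat.choose 2 1 : F) = 0 by norm_num] at h
        exact h
      rw [c1, c2, c3, c4]
      simp only [map_zero, zero_mul, sub_zero]
      rw [show 2*(3:ℕ)^s+1-3^s = 3^s+1 by omega,
        show (3:ℕ)^(2*s+1)+2*3^s-3^s = 3^(2*s+1)+3^s by generalize (3:ℕ)^(2*s+1) = A; omega,
        show 2*(3:ℕ)^s+1-(3^s+1) = 3^s by omega]
      ring
    · simp only [pZ, ell, q, q0, map_sub, map_add, hD]
      rw [rowQmul s _ _ hs (by omega) (by omega), rowQmul s _ _ hs (by omega) (by omega),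
        rowQmul s _ _ hs (by omega) (by omega), rowQmul s _ _ hs (by omega) (by omega)]
      simp only [map_zero, zero_mul, add_zero, sub_zero]
      have c1 : ((2*3^s + 1).choose (2*3^s) : F) = 1 := by
        have h := rowSmall s hs 2 2 1 0 le_rfl (by norm_num)
        rw [show 1 + 2*3^s = 2*3^s+1 by ring, show 0 + 2*3^s = 2*(3:ℕ)^s by ring,
          show ((Nat.choose 1 0 : F)) * (Nat.choose 2 2 : F) = 1 by norm_num] at h
        exact h
      have c2 : ((3^(2*s+1) + 2*3^s).choose (2*3^s) : F) = 1 := by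
        have h := rowN2 s hs 2 2 0 (by norm_num) (by norm_num) (by norm_num)
        rw [show 0 + 2*3^s = 2*(3:ℕ)^s by ring,
          show ((Nat.choose 0 0 : F)) * (Nat.choose 2 2 : F) = 1 by norm_num] at h
        exact h
      have c4 : ((3^(2*s+1) + 2*3^s).choose (2*3^s + 1) : F) = 0 := by
        have h := rowN2 s hs 2 2 1 (by norm_num) (by norm_num) (by norm_num)
        rw [show 1 + 2*3^s = 2*(3:ℕ)^s+1 by ring,
          show ((Nat.choose 0 1 : F)) * (Nat.choose 2 2 : F) = 0 by norm_num] at h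
        exact h
      rw [c1, c2, c4]
      simp only [Nat.choose_self, Nat.cast_one, map_one, one_mul, map_zero, zero_mul, sub_zero]
      rw [show 2*(3:ℕ)^s+1-2*3^s = 1 by omega,
        show (3:ℕ)^(2*s+1)+2*3^s-2*3^s = 3^(2*s+1) by generalize (3:ℕ)^(2*s+1) = A; omega, Nat.sub_self]
      ring
    · simp only [pZ, ell, q, q0, map_sub, map_add, hD]
      rw [rowQmul s _ _ hs (by omega) (by omega), rowQmul s _ _ hs (by omega) (by omega),
        rowQmul s _ _ hs (by omega) (by omega), rowQmul s _ _ hs (by omega) (by omega)]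
      have c1 : ((2*3^s + 1).choose (3*3^s) : F) = 0 := by
        have h := rowN1big s hs 2 1 0 (by norm_num) le_rfl (by norm_num)
        rw [show 1 + 2*3^s = 2*3^s+1 by ring, show 0 + 3*3^s = 3*(3:ℕ)^s by ring] at h
        exact h
      have c2 : ((3^(2*s+1) + 2*3^s).choose (3*3^s) : F) = 0 := by
        have h := rowN2big s hs 2 0 (by norm_num) (by norm_num)
        rw [show 0 + 3*3^s = 3*(3:ℕ)^s by ring] at h
        exact h
      have c3 : ((2*3^s + 1).choose (3*3^s + 1) : F) = 0 := by
        have h := rowN1big s hs 2 1 1 (by norm_num) le_rfl le_rfl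
        rw [show 1 + 2*3^s = 2*3^s+1 by ring, show 1 + 3*3^s = 3*(3:ℕ)^s+1 by ring] at h
        exact h
      have c4 : ((3^(2*s+1) + 2*3^s).choose (3*3^s + 1) : F) = 0 := by
        have h := rowN2big s hs 2 1 (by norm_num) le_rfl
        rw [show 1 + 3*3^s = 3*(3:ℕ)^s+1 by ring] at h
        exact h
      rw [c1, c2, c3, c4]
      simp
end
end

section
/- (Support and values of the Hasse derivatives of the coordinate function y of the Ree curve.) The polynomial p_y satisfies: D^1 p_y = X^q0; D^q0 p_y = X - X^q; D^(q0+1) p_y = 1; D^q p_y = X^(q*q0) - X^q0; D^(q+q0) p_y = -1; D^(q*q0) p_y = X^q - X^(q^2); D^(q*q0+q) p_y = 1; and D^i p_y = 0 for every integer i with 1 ≤ i ≤ q^2 - 1 and i ∉ {1, q0, q0+1, q, q+q0, q*q0, q*q0+q}. -/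
noncomputable section

open Polynomial

/-!
In characteristic `p`, `p ∣ (p ^ k).choose i` for `0 < i < p ^ k`, so `D^i X^(p^k)` vanishes
unless `i ∈ {0, p^k}`. By the Leibniz rule, for `i ≠ 0` only three pairs survive in
`D^i X^(p^u + p^v)`, giving `[i = p^u] X^(p^v) + [i = p^v] X^(p^u) + [i = p^u + p^v]`. Each of the four monomials of `p_y` has such an exponent, built from consecutive
terms of `1 < q0 < q < q q0 < q^2`; since each term is at least three times the previous one,
the resulting indices are pairwise distinct and the table can be read off.
-/

open Finset.HasAntidiagonal

section CharP

variable {R : Type*} [Semiring R] {p : ℕ} [hp : Fact p.Prime] [CharP R p]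

theorem hasseDeriv_X_pow_prime_pow (k i : ℕ) :
    hasseDeriv i (X ^ p ^ k : R[X]) = if i = 0 then X ^ p ^ k else if i = p ^ k then 1 else 0 := by
  rw [X_pow_eq_monomial, hasseDeriv_monomial]
  split_ifs with h0 hk
  · simp [h0]
  · simp [hk]
  · have : ((p ^ k).choose i : R) = 0 :=
      (CharP.cast_eq_zero_iff R p _).mpr (hp.out.dvd_choose_pow h0 hk)
    simp [this]

theorem hasseDeriv_X_pow_add_prime_pow (u v : ℕ) {i : ℕ} (hi : i ≠ 0) :
    hasseDeriv i (X ^ (p ^ u + p ^ v) : R[X]) =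
      (if i = p ^ u then X ^ p ^ v else 0) + (if i = p ^ v then X ^ p ^ u else 0) +
        (if i = p ^ u + p ^ v then 1 else 0) := by
  have hu : p ^ u ≠ 0 := pow_ne_zero u hp.out.ne_zero
  have hv : p ^ v ≠ 0 := pow_ne_zero v hp.out.ne_zero
  have summand : ∀ jk ∈ antidiagonal i,
      hasseDeriv jk.1 (X ^ p ^ u : R[X]) * hasseDeriv jk.2 (X ^ p ^ v) =
        (if (p ^ u, 0) = jk then X ^ p ^ v else 0) + (if (0, p ^ v) = jk then X ^ p ^ u else 0) +
          (if (p ^ u, p ^ v) = jk then 1 else 0) := by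
    rintro ⟨j, k⟩ hjk
    rw [mem_antidiagonal] at hjk
    simp only [hasseDeriv_X_pow_prime_pow, Prod.mk.injEq]
    split_ifs <;> first | omega | simp
  rw [pow_add, hasseDeriv_mul, Finset.sum_congr rfl summand, Finset.sum_add_distrib,
    Finset.sum_add_distrib, Finset.sum_ite_eq, Finset.sum_ite_eq, Finset.sum_ite_eq]
  simp only [mem_antidiagonal, add_zero, zero_add, eq_comm]

end CharP

theorem q_mul_q0 (s : ℕ) : q s * q0 s = 3 ^ (3 * s + 1) := by
  rw [q, q0, ← pow_add]; ring_nf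

theorem q_sq (s : ℕ) : q s ^ 2 = 3 ^ (4 * s + 2) := by
  rw [q, ← pow_mul]; ring_nf

theorem pY_eq_X_pow_three_pow_add (s : ℕ) :
    pY s = X ^ (3 ^ 0 + 3 ^ s) - X ^ (3 ^ s + 3 ^ (2 * s + 1)) +
      X ^ (3 ^ (2 * s + 1) + 3 ^ (3 * s + 1)) - X ^ (3 ^ (3 * s + 1) + 3 ^ (4 * s + 2)) := by
  rw [pY, q0, q]; ring_nf

theorem hasseDeriv_pY (s : ℕ) {i : ℕ} (hi : i ≠ 0) : hasseDeriv i (pY s) =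
    (if i = 1 then X ^ q0 s else 0) + (if i = q0 s then X else 0) +
        (if i = 1 + q0 s then 1 else 0) -
      ((if i = q0 s then X ^ q s else 0) + (if i = q s then X ^ q0 s else 0) +
        (if i = q0 s + q s then 1 else 0)) +
      ((if i = q s then X ^ (q s * q0 s) else 0) + (if i = q s * q0 s then X ^ q s else 0) +
        (if i = q s + q s * q0 s then 1 else 0)) -
      ((if i = q s * q0 s then X ^ q s ^ 2 else 0) + (if i = q s ^ 2 then X ^ (q s * q0 s) else 0) +
        (if i = q s * q0 s + q s ^ 2 then 1 else 0)) := by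
  rw [pY_eq_X_pow_three_pow_add, map_sub, map_add, map_sub]
  simp only [hasseDeriv_X_pow_add_prime_pow _ _ hi]
  rw [← q_mul_q0, ← q_sq, pow_zero, pow_one, ← q, ← q0]

theorem stmt18 (s : ℕ) (hs : 1 ≤ s) :
    hasseDeriv 1 (pY s) = X ^ q0 s ∧
    hasseDeriv (q0 s) (pY s) = X - X ^ q s ∧
    hasseDeriv (q0 s + 1) (pY s) = 1 ∧
    hasseDeriv (q s) (pY s) = X ^ (q s * q0 s) - X ^ q0 s ∧
    hasseDeriv (q s + q0 s) (pY s) = -1 ∧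
    hasseDeriv (q s * q0 s) (pY s) = X ^ q s - X ^ (q s ^ 2) ∧
    hasseDeriv (q s * q0 s + q s) (pY s) = 1 ∧
    ∀ i : ℕ, 1 ≤ i → i ≤ q s ^ 2 - 1 →
      i ∉ ({1, q0 s, q0 s + 1, q s, q s + q0 s, q s * q0 s, q s * q0 s + q s} : Set ℕ) →
      hasseDeriv i (pY s) = 0 := by
  have h₀ : 3 ≤ q0 s := Nat.le_self_pow (by omega) 3
  have h₁ : 3 * q0 s ≤ q s := by
    rw [q0, q, ← pow_succ']; exact Nat.pow_le_pow_right (by norm_num) (by omega)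
  have h₂ : 3 * q s ≤ q s * q0 s := by rw [mul_comm]; exact Nat.mul_le_mul_left _ h₀
  have h₃ : 3 * (q s * q0 s) ≤ q s ^ 2 := by
    rw [sq, mul_left_comm]; exact Nat.mul_le_mul_left _ h₁
  simp only [Set.mem_insert_iff, Set.mem_singleton_iff]
  refine ⟨?_, ?_, ?_, ?_, ?_, ?_, ?_, fun i hi₁ hi₂ hi => ?_⟩
  all_goals
    rw [hasseDeriv_pY s (by omega)]
    simp (disch := omega) only [if_pos, if_neg, if_true]
    ring
end
end

section
/- (Support and values of the Hasse derivatives of the coordinate function z of the Ree curve.) The polynomial p_z satisfies: D^1 p_z = X^(2q0); D^q0 p_z = X^(q+q0) - X^(q0+1); D^(q0+1) p_z = -X^q0; D^(2q0) p_z = X - X^q; D^(2q0+1) p_z = 1; D^q p_z = X^(2q*q0) - X^(2q0); D^(q+q0) p_z = X^q0; D^(q+2q0) p_z = -1; D^(q*q0) p_z = X^(q^2+q*q0) - X^(q*q0+q); D^(q*q0+q) p_z = -X^(q*q0); D^(2q*q0) p_z = X^q - X^(q^2); D^(2q*q0+q) p_z = 1; and D^i p_z = 0 for every integer i with 1 ≤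 i ≤ q^2 - 1 and i ∉ {1, q0, q0+1, 2q0, 2q0+1, q, q+q0, q+2q0, q*q0, q*q0+q, 2q*q0, 2q*q0+q}. -/
noncomputable section

open Polynomial

/-!
By Lucas's theorem, in characteristic `p` the binomial coefficient `binom(u p^e + v p^f, i)`
with digits `u < p` and `e < f` vanishes unless `i = m p^e + j p^f` with `m ≤ u`, `j ≤ v`, in
which case it equals `binom(u, m) binom(v, j)`. Each of the four monomials of `p_z` has such a
two-digit exponent in base `3`, at the consecutive digit positions `0 < s < 2s+1 < 3s+1 < 4s+2`,
i.e. at the places `1 < q0 < q < q q0 < q^2`. So `D^i p_z` is a sum of at most four explicit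
terms, and which of them survive for a given `i` is decided by comparing digit expansions,
using only `3 ≤ q0`, `3 q0 ≤ q`, `3 q ≤ q q0` and `3 q q0 ≤ q^2`.
-/

open Finset

namespace Nat

variable {p e f x y : ℕ}

theorem mul_pow_lt_pow_of_lt (hx : x < p) (hef : e < f) : x * p ^ e < p ^ f :=
  calc x * p ^ e < p * p ^ e := Nat.mul_lt_mul_of_pos_right hx (pow_pos (zero_lt_of_lt hx) e)
    _ = p ^ (e + 1) := (_root_.pow_succ' p e).symm
    _ ≤ p ^ f := Nat.pow_le_pow_right (zero_lt_of_lt hx) hef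

theorem mul_pow_add_mul_pow_mod (hx : x < p) (hef : e < f) :
    (x * p ^ e + y * p ^ f) % p ^ f = x * p ^ e := by
  rw [add_mul_mod_self_right, mod_eq_of_lt (mul_pow_lt_pow_of_lt hx hef)]

theorem mul_pow_add_mul_pow_div (hx : x < p) (hef : e < f) :
    (x * p ^ e + y * p ^ f) / p ^ f = y := by
  rw [add_mul_div_right _ _ (pow_pos (zero_lt_of_lt hx) f),
    div_eq_of_lt (mul_pow_lt_pow_of_lt hx hef), zero_add]

theorem mul_pow_add_mul_pow_inj {x' y' : ℕ} (hx : x < p) (hx' : x' < p) (hef : e < f)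
    (h : x * p ^ e + y * p ^ f = x' * p ^ e + y' * p ^ f) : x = x' ∧ y = y' := by
  have hmod := congrArg (· % p ^ f) h
  have hdiv := congrArg (· / p ^ f) h
  simp only [mul_pow_add_mul_pow_mod hx hef, mul_pow_add_mul_pow_mod hx' hef,
    mul_pow_add_mul_pow_div hx hef, mul_pow_add_mul_pow_div hx' hef] at hmod hdiv
  exact ⟨eq_of_mul_eq_mul_right (pow_pos (zero_lt_of_lt hx) e) hmod, hdiv⟩

end Nat

namespace Choose

variable {p : ℕ} [Fact p.Prime]

theorem choose_modEq_choose_mod_pow_mul_choose_div_pow_nat (a n k : ℕ) :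
    n.choose k ≡ (n % p ^ a).choose (k % p ^ a) * (n / p ^ a).choose (k / p ^ a) [MOD p] := by
  induction a generalizing n k with
  | zero => simpa [Nat.mod_one] using Nat.ModEq.refl _
  | succ a ih =>
    have hdvd : p ∣ p ^ (a + 1) := dvd_pow_self p a.succ_ne_zero
    have hmod (x : ℕ) : x % p ^ (a + 1) % p = x % p := Nat.mod_mod_of_dvd x hdvd
    have hdiv (x : ℕ) : x % p ^ (a + 1) / p = x / p % p ^ a := by
      rw [pow_succ', Nat.mod_mul_right_div_self]
    calc n.choose k
        ≡ (n % p).choose (k % p) * (n / p).choose (k / p) [MOD p] :=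
          choose_modEq_choose_mod_mul_choose_div_nat
      _ ≡ (n % p).choose (k % p) *
            ((n / p % p ^ a).choose (k / p % p ^ a) * (n / p / p ^ a).choose (k / p / p ^ a))
            [MOD p] := (ih _ _).mul_left _
      _ = (n % p ^ (a + 1) % p).choose (k % p ^ (a + 1) % p) *
            (n % p ^ (a + 1) / p).choose (k % p ^ (a + 1) / p) *
            (n / p ^ (a + 1)).choose (k / p ^ (a + 1)) := by
          simp only [hmod, hdiv, Nat.div_div_eq_div_mul, ← pow_succ']; ring
      _ ≡ (n % p ^ (a + 1)).choose (k % p ^ (a + 1)) * (n / p ^ (a + 1)).choose (k / p ^ (a + 1))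
            [MOD p] := choose_modEq_choose_mod_mul_choose_div_nat.symm.mul_right _

variable {e f u v : ℕ}

theorem choose_mul_pow_add_mul_pow_modEq {m j : ℕ} (hu : u < p) (hm : m < p) (hef : e < f) :
    (u * p ^ e + v * p ^ f).choose (m * p ^ e + j * p ^ f) ≡ u.choose m * v.choose j [MOD p] :=
  calc _ ≡ (u * p ^ e).choose (m * p ^ e) * v.choose j [MOD p] := by
        simpa only [Nat.mul_pow_add_mul_pow_mod hu hef, Nat.mul_pow_add_mul_pow_mod hm hef,
          Nat.mul_pow_add_mul_pow_div hu hef, Nat.mul_pow_add_mul_pow_div hm hef] using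
          choose_modEq_choose_mod_pow_mul_choose_div_pow_nat (p := p) f
            (u * p ^ e + v * p ^ f) (m * p ^ e + j * p ^ f)
    _ ≡ u.choose m * v.choose j [MOD p] := by
        rw [mul_comm u, mul_comm m]
        exact (choose_pow_mul_pow_mul_modEq_choose_nat (p := p)).mul_right _

theorem exists_eq_mul_pow_add_mul_pow_of_not_dvd_choose {i : ℕ} (hu : u < p) (hef : e < f)
    (h : ¬ p ∣ (u * p ^ e + v * p ^ f).choose i) :
    ∃ m ≤ u, ∃ j ≤ v, i = m * p ^ e + j * p ^ f := by
  have hlucas : (u * p ^ e + v * p ^ f).choose i ≡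
      (0 : ℕ).choose (i % p ^ e) * u.choose (i % p ^ f / p ^ e) * v.choose (i / p ^ f) [MOD p] := by
    have hf := choose_modEq_choose_mod_pow_mul_choose_div_pow_nat (p := p) f
      (u * p ^ e + v * p ^ f) i
    have he := choose_modEq_choose_mod_pow_mul_choose_div_pow_nat (p := p) e (u * p ^ e) (i % p ^ f)
    rw [Nat.mul_pow_add_mul_pow_mod hu hef, Nat.mul_pow_add_mul_pow_div hu hef] at hf
    rw [Nat.mul_mod_left, Nat.mul_div_cancel _ (pow_pos (Nat.zero_lt_of_lt hu) e),
      Nat.mod_mod_of_dvd _ (pow_dvd_pow p hef.le)] at he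
    exact hf.trans (he.mul_right _)
  have hne : (0 : ℕ).choose (i % p ^ e) * u.choose (i % p ^ f / p ^ e) * v.choose (i / p ^ f) ≠ 0 :=
    fun h0 => h (Nat.modEq_zero_iff_dvd.1 (h0 ▸ hlucas))
  simp only [ne_eq, mul_eq_zero, Nat.choose_eq_zero_iff, not_or, not_lt, Nat.le_zero] at hne
  obtain ⟨⟨hi0, hm⟩, hj⟩ := hne
  refine ⟨i % p ^ f / p ^ e, hm, i / p ^ f, hj, ?_⟩
  have hf := Nat.mod_add_div i (p ^ f)
  have he := Nat.mod_add_div (i % p ^ f) (p ^ e)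
  rw [Nat.mod_mod_of_dvd _ (pow_dvd_pow p hef.le), hi0] at he
  rw [mul_comm _ (p ^ e), mul_comm _ (p ^ f)]
  omega

end Choose

namespace Polynomial

theorem hasseDeriv_X_pow {R : Type*} [Semiring R] (i n : ℕ) :
    hasseDeriv i (X ^ n : R[X]) = (n.choose i : R[X]) * X ^ (n - i) := by
  rw [X_pow_eq_monomial, hasseDeriv_monomial, mul_one, ← C_mul_X_pow_eq_monomial, map_natCast]

open Choose in
theorem hasseDeriv_X_pow_mul_pow_add_mul_pow {R : Type*} [CommRing R] {p : ℕ}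
    [Fact p.Prime] [CharP R p] {e f u v : ℕ} (hu : u < p) (hef : e < f) (i : ℕ) :
    hasseDeriv i (X ^ (u * p ^ e + v * p ^ f) : R[X]) =
      ∑ m ∈ range (u + 1), ∑ j ∈ range (v + 1),
        if i = m * p ^ e + j * p ^ f then
          ((u.choose m * v.choose j : ℕ) : R[X]) * X ^ ((u - m) * p ^ e + (v - j) * p ^ f)
        else 0 := by
  rw [hasseDeriv_X_pow]
  by_cases hi : ∃ m ≤ u, ∃ j ≤ v, i = m * p ^ e + j * p ^ f
  · obtain ⟨m, hm, j, hj, rfl⟩ := hi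
    have hmp : m < p := hm.trans_lt hu
    rw [sum_eq_single_of_mem m (mem_range.2 (by omega)), sum_eq_single_of_mem j
      (mem_range.2 (by omega)), if_pos rfl]
    · rw [(CharP.natCast_eq_natCast R[X] p).2 (choose_mul_pow_add_mul_pow_modEq hu hmp hef),
        Nat.sub_mul, Nat.sub_mul]
      have := Nat.mul_le_mul_right (p ^ e) hm
      have := Nat.mul_le_mul_right (p ^ f) hj
      congr 2
      omega
    · intro j' _ hj'
      exact if_neg fun h => hj' (Nat.mul_pow_add_mul_pow_inj hmp hmp hef h).2.symm
    · intro m' hm' hm'm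
      refine sum_eq_zero fun j' _ => if_neg fun h => hm'm ?_
      exact (Nat.mul_pow_add_mul_pow_inj hmp ((mem_range.1 hm').trans_le hu) hef h).1.symm
  · rw [(CharP.cast_eq_zero_iff R[X] p _).2 (by_contra fun h =>
      hi (exists_eq_mul_pow_add_mul_pow_of_not_dvd_choose hu hef h)), zero_mul]
    refine (sum_eq_zero fun m hm => sum_eq_zero fun j hj => if_neg fun h => hi ?_).symm
    exact ⟨m, Nat.lt_succ_iff.1 (mem_range.1 hm), j, Nat.lt_succ_iff.1 (mem_range.1 hj), h⟩

end Polynomial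

theorem CharP.two_eq_neg_one {R : Type*} [Ring R] [CharP R 3] : (2 : R) = -1 := by
  rw [eq_neg_iff_add_eq_zero, show (2 + 1 : R) = (3 : ℕ) by norm_num, CharP.cast_eq_zero]

theorem q_eq_three_mul_q0_sq (s : ℕ) : q s = 3 * q0 s ^ 2 := by
  unfold q q0; ring

theorem three_pow_three_mul_add_one (s : ℕ) : 3 ^ (3 * s + 1) = q s * q0 s := by
  unfold q q0; ring

theorem three_pow_four_mul_add_two (s : ℕ) : 3 ^ (4 * s + 2) = q s ^ 2 := by
  unfold q; ring

theorem pZ_eq_two_digit (s : ℕ) :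
    pZ s = X ^ (1 * 3 ^ 0 + 2 * 3 ^ s) - X ^ (2 * 3 ^ s + 1 * 3 ^ (2 * s + 1)) +
      X ^ (1 * 3 ^ (2 * s + 1) + 2 * 3 ^ (3 * s + 1)) -
      X ^ (2 * 3 ^ (3 * s + 1) + 1 * 3 ^ (4 * s + 2)) := by
  unfold pZ q q0; ring_nf

theorem hasseDeriv_pZ {s : ℕ} (hs : 0 < s) (i : ℕ) :
    hasseDeriv i (pZ s) =
      (∑ m ∈ range 2, ∑ j ∈ range 3, if i = m + j * q0 s then
        ((Nat.choose 1 m * Nat.choose 2 j : ℕ) : F[X]) * X ^ ((1 - m) + (2 - j) * q0 s) else 0) -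
      (∑ m ∈ range 3, ∑ j ∈ range 2, if i = m * q0 s + j * q s then
        ((Nat.choose 2 m * Nat.choose 1 j : ℕ) : F[X]) * X ^ ((2 - m) * q0 s + (1 - j) * q s)
        else 0) +
      (∑ m ∈ range 2, ∑ j ∈ range 3, if i = m * q s + j * (q s * q0 s) then
        ((Nat.choose 1 m * Nat.choose 2 j : ℕ) : F[X]) *
          X ^ ((1 - m) * q s + (2 - j) * (q s * q0 s)) else 0) -
      (∑ m ∈ range 3, ∑ j ∈ range 2, if i = m * (q s * q0 s) + j * q s ^ 2 then
        ((Nat.choose 2 m * Nat.choose 1 j : ℕ) : F[X]) *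
          X ^ ((2 - m) * (q s * q0 s) + (1 - j) * q s ^ 2) else 0) := by
  rw [pZ_eq_two_digit]
  simp only [map_sub, map_add]
  rw [hasseDeriv_X_pow_mul_pow_add_mul_pow (p := 3) (by norm_num) hs,
    hasseDeriv_X_pow_mul_pow_add_mul_pow (p := 3) (by norm_num) (by omega),
    hasseDeriv_X_pow_mul_pow_add_mul_pow (p := 3) (by norm_num) (by omega),
    hasseDeriv_X_pow_mul_pow_add_mul_pow (p := 3) (by norm_num) (by omega), pow_zero,
    three_pow_four_mul_add_two, three_pow_three_mul_add_one, ← q, ← q0]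
  simp only [mul_one]

theorem stmt19 (s : ℕ) (hs : 1 ≤ s) :
    hasseDeriv 1 (pZ s) = X ^ (2 * q0 s) ∧
    hasseDeriv (q0 s) (pZ s) = X ^ (q s + q0 s) - X ^ (q0 s + 1) ∧
    hasseDeriv (q0 s + 1) (pZ s) = -X ^ q0 s ∧
    hasseDeriv (2 * q0 s) (pZ s) = X - X ^ q s ∧
    hasseDeriv (2 * q0 s + 1) (pZ s) = 1 ∧
    hasseDeriv (q s) (pZ s) = X ^ (2 * (q s * q0 s)) - X ^ (2 * q0 s) ∧
    hasseDeriv (q s + q0 s) (pZ s) = X ^ q0 s ∧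
    hasseDeriv (q s + 2 * q0 s) (pZ s) = -1 ∧
    hasseDeriv (q s * q0 s) (pZ s) = X ^ (q s ^ 2 + q s * q0 s) - X ^ (q s * q0 s + q s) ∧
    hasseDeriv (q s * q0 s + q s) (pZ s) = -X ^ (q s * q0 s) ∧
    hasseDeriv (2 * (q s * q0 s)) (pZ s) = X ^ q s - X ^ (q s ^ 2) ∧
    hasseDeriv (2 * (q s * q0 s) + q s) (pZ s) = 1 ∧
    ∀ i : ℕ, 1 ≤ i → i ≤ q s ^ 2 - 1 →
      i ∉ ({1, q0 s, q0 s + 1, 2 * q0 s, 2 * q0 s + 1, q s, q s + q0 s, q s + 2 * q0 s,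
            q s * q0 s, q s * q0 s + q s, 2 * (q s * q0 s), 2 * (q s * q0 s) + q s} : Set ℕ) →
      hasseDeriv i (pZ s) = 0 := by
  have h3 : 3 ≤ q0 s := le_self_pow₀ (by norm_num) (by omega)
  have hq : 3 * q0 s ≤ q s := by rw [q_eq_three_mul_q0_sq]; nlinarith
  have hqq0 : 3 * q s ≤ q s * q0 s := by rw [mul_comm 3]; exact Nat.mul_le_mul_left _ h3
  have hq2 : 3 * (q s * q0 s) ≤ q s ^ 2 := by
    rw [sq, mul_left_comm]; exact Nat.mul_le_mul_left _ hq
  simp only [hasseDeriv_pZ hs, sum_range_succ, sum_range_zero, zero_add, Set.mem_insert_iff,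
    Set.mem_singleton_iff, not_or]
  -- With `q0 s`, `q s`, `q s * q0 s`, `q s ^ 2` as atoms, `omega` decides every digit condition.
  refine ⟨?_, ?_, ?_, ?_, ?_, ?_, ?_, ?_, ?_, ?_, ?_, ?_, fun i hi₁ hi₂ hi => ?vanish⟩
  case vanish =>
    simp (disch := omega) only [if_neg]
    simp
  all_goals
    simp (disch := omega) only [if_pos, if_neg]
    simp only [Nat.choose_self, Nat.choose_zero_right, Nat.choose_one_right, mul_one, one_mul,
      Nat.cast_one, Nat.cast_ofNat, CharP.two_eq_neg_one]
    norm_num <;> ring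
end
end
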